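/- arXiv:1602.07301 — 11 statements merged into one kernel-verified Lean document; each statement's English description precedes it below -/
import Mathlib

section
/- Let X be a uniform space with its induced topology, and let 𝒰 be a cover of X by open sets that is a uniform cover, i.e., there is an entourage E of X such that the cover {E[x] : x ∈ X} refines 𝒰 (where E[x] = {y ∈ X : (x,y) ∈ E}). Then there exists a continuous partition of unity subordinated to 𝒰: a family (φ_U)_{U∈𝒰} of continuous functions φ_U : X → [0,1] such that the support of φ_U is contained in U for each U ∈ 𝒰, and for each x ∈ X the (unconditionally convergent) sum ∑_{U∈𝒰} φ_U(x) equals 1. -/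
/-!
A uniform cover is refined by the balls of a single entourage `E`. Halving `E` repeatedly gives
symmetric entourages `V 0 ⊆ E` with `V (n + 1) ○ V (n + 1) ⊆ V n`; they generate a coarser,
countably generated uniform structure in which `E` is still an entourage. That structure is
pseudometrizable, hence paracompact and normal, and every point has a member of the cover as a
neighbourhood, so the cover has a subordinate partition of unity there. Its functions stay
continuous for the finer original topology.
-/

open Set Filter Topology Uniformity UniformSpace
open scoped SetRel

section

variable {X : Type*}

theorem exists_seq_isSymm_comp_subset [UniformSpace X] {E : SetRel X X} (hE : E ∈ 𝓤 X) :
    ∃ V : ℕ → SetRel X X, (∀ n, V n ∈ 𝓤 X) ∧ (∀ n, (V n).IsSymm) ∧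
      (∀ n, V (n + 1) ○ V (n + 1) ⊆ V n) ∧ V 0 ⊆ E := by
  choose! half half_mem half_isSymm half_comp using
    fun s (hs : s ∈ 𝓤 X) => comp_symm_mem_uniformity_sets hs
  have iterate_mem (n : ℕ) : half^[n] E ∈ 𝓤 X := by
    induction n with
    | zero => exact hE
    | succ n ih => rw [Function.iterate_succ_apply']; exact half_mem _ ih
  refine ⟨fun n => half (half^[n] E), fun n => half_mem _ (iterate_mem n),
    fun n => half_isSymm _ (iterate_mem n), fun n => ?_, ?_⟩
  · show half (half^[n + 1] E) ○ half (half^[n + 1] E) ⊆ half (half^[n] E)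
    rw [← Function.iterate_succ_apply' half n]
    exact half_comp _ (iterate_mem (n + 1))
  · exact (subset_comp_self_of_mem_uniformity (half_mem E hE)).trans (half_comp E hE)

abbrev UniformSpace.ofSeq (V : ℕ → SetRel X X) (refl : ∀ n, (V n).IsRefl)
    (symm : ∀ n, (V n).IsSymm) (comp : ∀ n, V (n + 1) ○ V (n + 1) ⊆ V n) : UniformSpace X :=
  .ofCore
    { uniformity := ⨅ n, 𝓟 (V n)
      refl := le_iInf fun n => principal_mono.2 (SetRel.id_subset_iff.2 (refl n))
      symm := tendsto_iInf.2 fun n => tendsto_iInf' n <| tendsto_principal_principal.2 fun _ h =>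
        SetRel.symm (V n) h
      comp := le_iInf fun n => le_principal_iff.2 <|
        mem_of_superset (mem_lift' (mem_iInf_of_mem (n + 1) (mem_principal_self _))) (comp n) }

theorem UniformSpace.exists_coarser_isCountablyGenerated [u : UniformSpace X] {E : SetRel X X}
    (hE : E ∈ 𝓤 X) : ∃ u' : UniformSpace X, u ≤ u' ∧ IsCountablyGenerated 𝓤[u'] ∧ E ∈ 𝓤[u'] := by
  obtain ⟨V, hV, hsymm, hcomp, hV₀⟩ := exists_seq_isSymm_comp_subset hE
  exact ⟨ofSeq V (fun n => isRefl_of_mem_uniformity (hV n)) hsymm hcomp,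
    le_iInf fun n => le_principal_iff.2 (hV n), isCountablyGenerated_seq _,
    mem_of_superset (mem_iInf_of_mem 0 (mem_principal_self _)) hV₀⟩

namespace PartitionOfUnity

variable {ι : Type*}

theorem hasSum_one [TopologicalSpace X] {s : Set X} (f : PartitionOfUnity ι X s) {x : X}
    (hx : x ∈ s) : HasSum (fun i => f i x) 1 := by
  rw [← f.sum_finsupport hx]
  exact hasSum_sum_of_ne_finset_zero fun i hi => by_contra fun h => hi ((f.mem_finsupport x).2 h)

theorem exists_isSubordinate_of_mem_nhds [TopologicalSpace X] [NormalSpace X] [ParacompactSpace X]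
    (U : ι → Set X) (hU : ∀ x, ∃ i, U i ∈ 𝓝 x) : ∃ f : PartitionOfUnity ι X, f.IsSubordinate U := by
  obtain ⟨f, hf⟩ := exists_isSubordinate isClosed_univ (fun i => interior (U i))
    (fun _ => isOpen_interior)
    (fun x _ => mem_iUnion.2 ((hU x).imp fun _ => mem_interior_iff_mem_nhds.2))
  exact ⟨f, fun i => (hf i).trans interior_subset⟩

theorem exists_isSubordinate_of_uniform_cover [UniformSpace X] [IsCountablyGenerated (𝓤 X)]
    (U : ι → Set X) (hU : ∃ E ∈ 𝓤 X, ∀ x, ∃ i, ball x E ⊆ U i) :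
    ∃ f : PartitionOfUnity ι X, f.IsSubordinate U := by
  let := UniformSpace.pseudoMetricSpace X
  obtain ⟨E, hE, hEU⟩ := hU
  exact exists_isSubordinate_of_mem_nhds U fun x =>
    (hEU x).imp fun _ => mem_of_superset (ball_mem_nhds x hE)

end PartitionOfUnity

end

theorem stmt_0_general {X : Type*} [UniformSpace X] (𝒰 : Set (Set X))
    (huniform : ∃ E ∈ uniformity X, ∀ x : X, ∃ U ∈ 𝒰, {y | (x, y) ∈ E} ⊆ U) :
    ∃ φ : 𝒰 → X → ℝ,
      (∀ U, Continuous (φ U)) ∧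
      (∀ U x, 0 ≤ φ U x) ∧ (∀ U x, φ U x ≤ 1) ∧
      (∀ U : 𝒰, Function.support (φ U) ⊆ (U : Set X)) ∧
      (∀ x, HasSum (fun U : 𝒰 => φ U x) 1) := by
  obtain ⟨E, hE, hE𝒰⟩ := huniform
  obtain ⟨u, hle, hcount, hEu⟩ := UniformSpace.exists_coarser_isCountablyGenerated hE
  obtain ⟨f, hf⟩ := @PartitionOfUnity.exists_isSubordinate_of_uniform_cover X 𝒰 u hcount (↑)
    ⟨E, hEu, fun x => let ⟨U, hU, hEU⟩ := hE𝒰 x; ⟨⟨U, hU⟩, hEU⟩⟩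
  exact ⟨fun U => f U, fun U => continuous_le_dom (toTopologicalSpace_mono hle) (f U).continuous,
    f.nonneg, f.le_one, fun U => (@subset_tsupport _ _ _ u.toTopologicalSpace _).trans (hf U),
    fun x => f.hasSum_one (mem_univ x)⟩

/-- Every uniform open cover of a uniform space admits a
subordinated continuous partition of unity. -/
theorem stmt_0 {X : Type*} [UniformSpace X] (𝒰 : Set (Set X))
    (hopen : ∀ U ∈ 𝒰, IsOpen U) (hcover : ⋃₀ 𝒰 = Set.univ)
    (huniform : ∃ E ∈ uniformity X, ∀ x : X, ∃ U ∈ 𝒰, {y | (x, y) ∈ E} ⊆ U) :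
    ∃ φ : 𝒰 → X → ℝ,
      (∀ U, Continuous (φ U)) ∧
      (∀ U x, 0 ≤ φ U x) ∧ (∀ U x, φ U x ≤ 1) ∧
      (∀ U : 𝒰, Function.support (φ U) ⊆ (U : Set X)) ∧
      (∀ x, HasSum (fun U : 𝒰 => φ U x) 1) :=
  stmt_0_general 𝒰 huniform
end

section
/- Let X be a topological space and let 𝒰 be a cover of X admitting a subordinated continuous partition of unity, i.e., a family (φ_U)_{U∈𝒰} of continuous functions φ_U : X → [0,1] with the support of φ_U contained in U and ∑_{U∈𝒰} φ_U(x) = 1 for every x ∈ X. Then there exists a cover 𝒱 of X admitting a subordinated continuous partition of unity such that st(𝒱,𝒱) refines 𝒰. -/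
/-- The star `st(A,𝒰)` of a set `A` with respect to a family `𝒰`. -/
def st {X : Type*} (A : Set X) (𝒰 : Set (Set X)) : Set X :=
  A ∪ ⋃ U ∈ {U ∈ 𝒰 | (U ∩ A).Nonempty}, U

/-- The family `st(𝒰,𝒱) = {st(U,𝒱) : U ∈ 𝒰}`. -/
def stFam {X : Type*} (𝒰 𝒱 : Set (Set X)) : Set (Set X) :=
  (fun U => st U 𝒱) '' 𝒰

/-- `𝒰` refines `𝒱`: every member of `𝒰` is contained in some member of `𝒱`. -/
def Refines {X : Type*} (𝒰 𝒱 : Set (Set X)) : Prop :=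
  ∀ U ∈ 𝒰, ∃ V ∈ 𝒱, U ⊆ V

/-- The family `𝒰` admits a subordinated continuous partition of unity. -/
def SubordPU {X : Type*} [TopologicalSpace X] (𝒰 : Set (Set X)) : Prop :=
  ∃ φ : 𝒰 → X → ℝ,
    (∀ U, Continuous (φ U)) ∧
    (∀ U x, 0 ≤ φ U x) ∧ (∀ U x, φ U x ≤ 1) ∧
    (∀ U : 𝒰, Function.support (φ U) ⊆ (U : Set X)) ∧
    (∀ x, HasSum (fun U : 𝒰 => φ U x) 1)

lemma max_zero_ne_zero_iff {a : ℝ} : max 0 a ≠ 0 ↔ 0 < a := by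
  rcases le_or_gt a 0 with h | h
  · simp [max_eq_left h, h, not_lt]
  · simp [max_eq_right h.le, h.ne', h]

section Construction

variable {X : Type*} [TopologicalSpace X] {𝒰 : Set (Set X)}

lemma subsum_le_one (ρ : 𝒰 → X → ℝ) (h0 : ∀ U x, 0 ≤ ρ U x)
    (hs : ∀ x, HasSum (fun U => ρ U x) 1) (x : X) (t : Finset 𝒰) :
    ∑ U ∈ t, ρ U x ≤ 1 :=
  sum_le_hasSum t (fun i _ => h0 i x) (hs x)

lemma off_le (ρ : 𝒰 → X → ℝ) (h0 : ∀ U x, 0 ≤ ρ U x)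
    (hs : ∀ x, HasSum (fun U => ρ U x) 1) (x : X) (t : Finset 𝒰) (U : 𝒰)
    (hU : U ∉ t) : ρ U x ≤ 1 - ∑ W ∈ t, ρ W x := by
  classical
  have := subsum_le_one ρ h0 hs x (insert U t)
  rw [Finset.sum_insert hU] at this
  linarith

lemma approx (ρ : 𝒰 → X → ℝ) (hs : ∀ x, HasSum (fun U => ρ U x) 1) (x : X)
    {ε : ℝ} (hε : 0 < ε) : ∃ t : Finset 𝒰, 1 - ε < ∑ U ∈ t, ρ U x :=
  ((hs x).eventually (eventually_gt_nhds (by linarith : 1 - ε < 1))).exists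

/-- STEP 2: a point-finite subordinated partition of unity yields a
"barycentric refinement" with a subordinated partition of unity. -/
lemma step2 (ρ : 𝒰 → X → ℝ)
    (hc : ∀ U, Continuous (ρ U)) (h0 : ∀ U x, 0 ≤ ρ U x) (h1 : ∀ U x, ρ U x ≤ 1)
    (hs : ∀ x, HasSum (fun U => ρ U x) 1)
    (hpf : ∀ x, {U | ρ U x ≠ 0}.Finite)
    (hsup : ∀ U : 𝒰, Function.support (ρ U) ⊆ (U : Set X)) :
    ∃ 𝒱 : Set (Set X), ⋃₀ 𝒱 = Set.univ ∧ SubordPU 𝒱 ∧ (∀ V ∈ 𝒱, V.Nonempty) ∧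
      (∀ x : X, ∃ U ∈ 𝒰, ∀ V ∈ 𝒱, x ∈ V → V ⊆ U) := by
  classical
  set d : Finset 𝒰 × ℕ → ℝ := fun p => (4 : ℝ)⁻¹ ^ p.2 with hd
  set Ψ : Finset 𝒰 × ℕ → X → ℝ := fun p x =>
    max 0 (∑ U ∈ p.1, ρ U x - (1 - d p)) * ∏ U ∈ p.1, max 0 (ρ U x - d p) with hΨdef
  have hd_pos : ∀ p, 0 < d p := fun p => by positivity
  have hd_le_one : ∀ p, d p ≤ 1 := fun p => pow_le_one₀ (by norm_num) (by norm_num)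
  have hd_mono : ∀ {n m : ℕ}, n ≤ m → (4 : ℝ)⁻¹ ^ m ≤ (4 : ℝ)⁻¹ ^ n :=
    fun h => pow_le_pow_of_le_one (by norm_num) (by norm_num) h
  have hΨc : ∀ p, Continuous (fun x => Ψ p x) := by
    intro p
    apply Continuous.mul
    · exact continuous_const.max ((continuous_finset_sum _ fun U _ => hc U).sub continuous_const)
    · exact continuous_finset_prod _ fun U _ => continuous_const.max ((hc U).sub continuous_const)
  have hΨ0 : ∀ p x, 0 ≤ Ψ p x := by
    intro p x
    exact mul_nonneg (le_max_left _ _) (Finset.prod_nonneg fun U _ => le_max_left _ _)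
  have hΨne : ∀ p x, Ψ p x ≠ 0 ↔
      (1 - d p < ∑ U ∈ p.1, ρ U x ∧ ∀ U ∈ p.1, d p < ρ U x) := by
    intro p x
    rw [hΨdef]
    simp only [mul_ne_zero_iff, Finset.prod_ne_zero_iff]
    constructor
    · rintro ⟨hA, hB⟩
      refine ⟨by have := max_zero_ne_zero_iff.1 hA; linarith, fun U hU => ?_⟩
      have := max_zero_ne_zero_iff.1 (hB U hU); linarith
    · rintro ⟨hA, hB⟩
      refine ⟨max_zero_ne_zero_iff.2 (by linarith), fun U hU => ?_⟩
      exact max_zero_ne_zero_iff.2 (by have := hB U hU; linarith)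
  have hΨbd : ∀ p x, Ψ p x ≤ d p := by
    intro p x
    have hA : max 0 (∑ U ∈ p.1, ρ U x - (1 - d p)) ≤ d p := by
      apply max_le (hd_pos p).le
      have := subsum_le_one ρ h0 hs x p.1
      linarith
    have hB : ∏ U ∈ p.1, max 0 (ρ U x - d p) ≤ 1 := by
      apply Finset.prod_le_one (fun U _ => le_max_left _ _)
      intro U hU
      apply max_le zero_le_one
      have := h1 U x; have := (hd_pos p).le; linarith
    calc Ψ p x ≤ d p * 1 := by
          rw [hΨdef]
          exact mul_le_mul hA hB (Finset.prod_nonneg fun U _ => le_max_left _ _) (hd_pos p).le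
      _ = d p := mul_one _
  have hchain : ∀ (x : X) {F : Finset 𝒰} {n : ℕ} {G : Finset 𝒰} {m : ℕ},
      Ψ (F, n) x ≠ 0 → Ψ (G, m) x ≠ 0 → n ≤ m → F ⊆ G := by
    intro x F n G m hF hG hnm U hU
    rw [hΨne] at hF hG
    by_contra hUG
    have l1 : d (F, n) < ρ U x := hF.2 U hU
    have l2 : d (G, m) ≤ d (F, n) := hd_mono hnm
    have l3 : ρ U x ≤ 1 - ∑ W ∈ G, ρ W x := off_le ρ h0 hs x G U hUG
    have l4 := hG.1
    simp only [hd] at l1 l2 l4 ⊢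
    linarith
  have huniq : ∀ (x : X) {F G : Finset 𝒰} {n : ℕ},
      Ψ (F, n) x ≠ 0 → Ψ (G, n) x ≠ 0 → F = G := by
    intro x F G n hF hG
    exact Finset.Subset.antisymm (hchain x hF hG le_rfl) (hchain x hG hF le_rfl)
  have geom : ∀ (K : ℕ) (s : Finset ℕ), (∀ n ∈ s, K ≤ n) →
      ∑ n ∈ s, (4 : ℝ)⁻¹ ^ n ≤ (2 : ℝ)⁻¹ ^ K * 2 := by
    intro K s hsK
    have e1 : ∀ n ∈ s, (4 : ℝ)⁻¹ ^ n ≤ (2 : ℝ)⁻¹ ^ K * (2 : ℝ)⁻¹ ^ n := by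
      intro n hn
      have h4 : (4 : ℝ)⁻¹ ^ n = (2 : ℝ)⁻¹ ^ n * (2 : ℝ)⁻¹ ^ n := by
        rw [← mul_pow]; norm_num
      rw [h4]
      have : (2 : ℝ)⁻¹ ^ n ≤ (2 : ℝ)⁻¹ ^ K :=
        pow_le_pow_of_le_one (by norm_num) (by norm_num) (hsK n hn)
      exact mul_le_mul_of_nonneg_right this (by positivity)
    calc ∑ n ∈ s, (4 : ℝ)⁻¹ ^ n ≤ ∑ n ∈ s, (2 : ℝ)⁻¹ ^ K * (2 : ℝ)⁻¹ ^ n :=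
          Finset.sum_le_sum e1
      _ = (2 : ℝ)⁻¹ ^ K * ∑ n ∈ s, (2 : ℝ)⁻¹ ^ n := by rw [Finset.mul_sum]
      _ ≤ (2 : ℝ)⁻¹ ^ K * 2 := by
          have hsummable : Summable (fun n : ℕ => (2 : ℝ)⁻¹ ^ n) :=
            summable_geometric_of_lt_one (by norm_num) (by norm_num)
          have h2 : ∑' n : ℕ, (2 : ℝ)⁻¹ ^ n = 2 := by
            rw [tsum_geometric_of_lt_one (by norm_num) (by norm_num)]; norm_num
          have := Summable.sum_le_tsum s (fun n _ => by positivity) hsummable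
          rw [h2] at this
          exact mul_le_mul_of_nonneg_left this (by positivity)
  -- partial-sum bound for any function dominated by Ψ
  have hTbound : ∀ (x : X) (K : ℕ) (f : Finset 𝒰 × ℕ → ℝ),
      (∀ p, 0 ≤ f p) → (∀ p, f p ≤ Ψ p x) →
      ∀ T : Finset (Finset 𝒰 × ℕ), (∀ p ∈ T, f p ≠ 0 → K ≤ p.2) →
      ∑ p ∈ T, f p ≤ (2 : ℝ)⁻¹ ^ K * 2 := by
    intro x K f hf0 hfΨ T hT
    have hne : ∀ p, f p ≠ 0 → Ψ p x ≠ 0 := by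
      intro p hp hΨp
      have := hfΨ p
      rw [hΨp] at this
      exact hp (le_antisymm this (hf0 p))
    set T' := T.filter (fun p => f p ≠ 0) with hT'
    have e1 : ∑ p ∈ T, f p = ∑ p ∈ T', f p := (Finset.sum_filter_ne_zero T).symm
    have e2 : ∑ p ∈ T', f p ≤ ∑ p ∈ T', (4 : ℝ)⁻¹ ^ p.2 :=
      Finset.sum_le_sum fun p _ => (hfΨ p).trans (hΨbd p x)
    have hinj : ∀ p ∈ T', ∀ q ∈ T', p.2 = q.2 → p = q := by
      intro p hp q hq hpq
      rw [hT', Finset.mem_filter] at hp hq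
      have h1 : Ψ (p.1, p.2) x ≠ 0 := by rw [Prod.mk.eta]; exact hne p hp.2
      have h2 : Ψ (q.1, p.2) x ≠ 0 := by rw [hpq, Prod.mk.eta]; exact hne q hq.2
      have := huniq x h1 h2
      exact Prod.ext this hpq
    have e3 : ∑ p ∈ T', (4 : ℝ)⁻¹ ^ p.2 = ∑ n ∈ T'.image Prod.snd, (4 : ℝ)⁻¹ ^ n :=
      (Finset.sum_image hinj).symm
    have e4 : ∑ n ∈ T'.image Prod.snd, (4 : ℝ)⁻¹ ^ n ≤ (2 : ℝ)⁻¹ ^ K * 2 := by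
      apply geom
      intro n hn
      obtain ⟨p, hp, rfl⟩ := Finset.mem_image.1 hn
      rw [hT', Finset.mem_filter] at hp
      exact hT p hp.1 hp.2
    rw [e1]; rw [e3] at e2; linarith
  have hΨsummable : ∀ x, Summable (fun p => Ψ p x) := by
    intro x
    apply summable_of_sum_le (c := (2 : ℝ)⁻¹ ^ 0 * 2) (fun p => hΨ0 p x)
    intro T
    exact hTbound x 0 (fun p => Ψ p x) (fun p => hΨ0 p x) (fun p => le_rfl) T
      (fun p _ _ => Nat.zero_le _)
  have hcover : ∀ x, ∃ p, Ψ p x ≠ 0 := by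
    intro x
    set s := (hpf x).toFinset with hsdef
    have hoff : ∀ U ∉ s, ρ U x = 0 := by
      intro U hU
      by_contra h
      exact hU ((hpf x).mem_toFinset.2 h)
    have hss : HasSum (fun U => ρ U x) (∑ U ∈ s, ρ U x) :=
      hasSum_sum_of_ne_finset_zero hoff
    have hs1 : ∑ U ∈ s, ρ U x = 1 := hss.unique (hs x)
    have hne : s.Nonempty := by
      rcases s.eq_empty_or_nonempty with h | h
      · rw [h, Finset.sum_empty] at hs1; norm_num at hs1
      · exact h
    have hm : 0 < s.inf' hne (fun U => ρ U x) := by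
      rw [Finset.lt_inf'_iff]
      intro U hU
      have : ρ U x ≠ 0 := (hpf x).mem_toFinset.1 hU
      exact lt_of_le_of_ne (h0 U x) (Ne.symm this)
    obtain ⟨n, hn⟩ := exists_pow_lt_of_lt_one hm (by norm_num : (4 : ℝ)⁻¹ < 1)
    refine ⟨(s, n), (hΨne (s, n) x).2 ⟨?_, ?_⟩⟩
    · have : (0 : ℝ) < d (s, n) := hd_pos _
      simp only [hs1]; linarith
    · intro U hU
      exact lt_of_lt_of_le hn (Finset.inf'_le _ hU)
  have hlocfin : ∀ (x₀ : X) (K : ℕ), ∃ (t : Finset 𝒰) (N : Set X),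
      IsOpen N ∧ x₀ ∈ N ∧
      ∀ y ∈ N, ∀ p : Finset 𝒰 × ℕ, Ψ p y ≠ 0 → p.2 ≤ K → p.1 ⊆ t := by
    intro x₀ K
    obtain ⟨t, ht⟩ := approx ρ hs x₀ (show (0:ℝ) < (4 : ℝ)⁻¹ ^ K by positivity)
    refine ⟨t, {y | 1 - (4 : ℝ)⁻¹ ^ K < ∑ U ∈ t, ρ U y}, ?_, ht, ?_⟩
    · exact isOpen_lt continuous_const (continuous_finset_sum _ fun U _ => hc U)
    · intro y hy p hp hpK U hU
      by_contra hUt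
      have l1 : d p < ρ U y := ((hΨne p y).1 hp).2 U hU
      have l2 : (4 : ℝ)⁻¹ ^ K ≤ d p := hd_mono hpK
      have l3 : ρ U y ≤ 1 - ∑ W ∈ t, ρ W y := off_le ρ h0 hs y t U hUt
      have l4 : 1 - (4 : ℝ)⁻¹ ^ K < ∑ U ∈ t, ρ U y := hy
      linarith
  -- continuity of indicator sums
  have hcont : ∀ R : Set (Finset 𝒰 × ℕ),
      Continuous (fun x => ∑' p, Set.indicator R (fun q => Ψ q x) p) := by
    intro R
    set g : (Finset 𝒰 × ℕ) → X → ℝ := fun p x => Set.indicator R (fun q => Ψ q x) p with hg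
    have hg0 : ∀ p x, 0 ≤ g p x := fun p x => Set.indicator_nonneg (fun q _ => hΨ0 q x) p
    have hgle : ∀ p x, g p x ≤ Ψ p x := fun p x =>
      Set.indicator_le_self' (fun q _ => hΨ0 q x) p
    have hgc : ∀ p, Continuous (fun x => g p x) := by
      intro p
      by_cases hp : p ∈ R
      · simpa [hg, Set.indicator_of_mem hp] using hΨc p
      · simp [hg, Set.indicator_of_notMem hp]
        exact continuous_const
    have hgsummable : ∀ x, Summable (fun p => g p x) := fun x =>
      Summable.of_nonneg_of_le (fun p => hg0 p x) (fun p => hgle p x) (hΨsummable x)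
    rw [continuous_iff_continuousAt]
    intro x₀
    rw [ContinuousAt, Metric.tendsto_nhds]
    intro ε hε
    obtain ⟨K, hK⟩ := exists_pow_lt_of_lt_one (show (0:ℝ) < ε / 6 by linarith)
      (show (2 : ℝ)⁻¹ < 1 by norm_num)
    have hK3 : (2 : ℝ)⁻¹ ^ K * 2 < ε / 3 := by linarith
    obtain ⟨t, N, hNopen, hx₀N, hNloc⟩ := hlocfin x₀ K
    set S : Finset (Finset 𝒰 × ℕ) := t.powerset ×ˢ Finset.range (K + 1) with hS
    have Sc : Set (Finset 𝒰 × ℕ) := {p : Finset 𝒰 × ℕ | p ∉ S}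
    have hSmem : ∀ y ∈ N, ∀ p ∉ S, g p y ≠ 0 → K + 1 ≤ p.2 := by
      intro y hy p hpS hgp
      have hΨp : Ψ p y ≠ 0 := by
        intro h
        apply hgp
        have h1 := hgle p y
        rw [h] at h1
        exact le_antisymm h1 (hg0 p y)
      by_contra hK2
      push_neg at hK2
      exact hpS (Finset.mem_product.2 ⟨Finset.mem_powerset.2
        (hNloc y hy p hΨp (Nat.lt_succ_iff.1 hK2)), Finset.mem_range.2 hK2⟩)
    have htail : ∀ y ∈ N, ∑' (p : ({p : Finset 𝒰 × ℕ | p ∉ S})), g (↑p) y ≤ (2 : ℝ)⁻¹ ^ K * 2 := by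
      intro y hy
      apply Summable.tsum_le_of_sum_le ((hgsummable y).subtype _)
      intro T
      simp only [Function.comp]
      rw [← Finset.sum_image (f := fun p => g p y) (g := Subtype.val)
        (fun q _ q' _ h => Subtype.ext h)]
      refine le_trans (hTbound y (K + 1) (fun p => g p y) (fun p => hg0 p y)
        (fun p => hgle p y) _ ?_) ?_
      · intro p hp hgp
        obtain ⟨q, hqT, rfl⟩ := Finset.mem_image.1 hp
        exact hSmem y hy _ q.2 hgp
      · have h21 : (2 : ℝ)⁻¹ ^ (K + 1) ≤ (2 : ℝ)⁻¹ ^ K :=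
          pow_le_pow_of_le_one (by norm_num) (by norm_num) (Nat.le_succ K)
        linarith
    have hsplit : ∀ y, (∑' p, g p y) =
        ∑ p ∈ S, g p y + ∑' (p : ({p : Finset 𝒰 × ℕ | p ∉ S})), g (↑p) y :=
      fun y => (Summable.sum_add_tsum_compl (hgsummable y)).symm
    have hfin : ContinuousAt (fun y => ∑ p ∈ S, g p y) x₀ :=
      (continuous_finset_sum _ fun p _ => hgc p).continuousAt
    have hev := Metric.tendsto_nhds.1 hfin (ε / 3) (by linarith)
    filter_upwards [hNopen.mem_nhds hx₀N, hev] with y hyN hyfin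
    have tnn : ∀ z, (0:ℝ) ≤ ∑' (p : ({p : Finset 𝒰 × ℕ | p ∉ S})), g (↑p) z :=
      fun z => tsum_nonneg fun q => hg0 q.1 z
    have t1 := htail y hyN
    have t2 := htail x₀ hx₀N
    have t3 := tnn y
    have t4 := tnn x₀
    rw [Real.dist_eq] at hyfin ⊢
    rw [hsplit y, hsplit x₀]
    have habs : |∑ p ∈ S, g p y - ∑ p ∈ S, g p x₀| < ε / 3 := hyfin
    set A := ∑ p ∈ S, g p y
    set B := ∑' (p : ({p : Finset 𝒰 × ℕ | p ∉ S})), g (↑p) y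
    set C := ∑ p ∈ S, g p x₀
    set D := ∑' (p : ({p : Finset 𝒰 × ℕ | p ∉ S})), g (↑p) x₀
    have e1 : |A + B - (C + D)| ≤ |A - C| + |B - D| := by
      have : A + B - (C + D) = (A - C) + (B - D) := by ring
      rw [this]
      exact abs_add_le _ _
    have e2 : |B - D| ≤ (2 : ℝ)⁻¹ ^ K * 2 := abs_le.2 ⟨by linarith, by linarith⟩
    have := abs_sub_abs_le_abs_sub A C
    calc |A + B - (C + D)| ≤ |A - C| + |B - D| := e1
      _ < ε / 3 + ε / 3 := by
          apply add_lt_add_of_lt_of_le habs (e2.trans hK3.le)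
      _ < ε := by linarith
  -- the refinement family
  set 𝒱 : Set (Set X) :=
    {V | (∃ p, Function.support (fun x => Ψ p x) = V) ∧ V.Nonempty} with h𝒱
  have hrep' : ∀ V : 𝒱, ∃ p, Function.support (fun x => Ψ p x) = (V : Set X) :=
    fun V => V.2.1
  choose rep hrep using hrep'
  have hrepmem : ∀ (V : 𝒱) (x : X), x ∈ (V : Set X) ↔ Ψ (rep V) x ≠ 0 := by
    intro V x
    rw [← hrep V]
    exact Iff.rfl
  have hrepinj : Function.Injective rep := by
    intro V W h
    apply Subtype.ext
    rw [← hrep V, ← hrep W, h]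
  set R : Set (Finset 𝒰 × ℕ) := Set.range rep with hR
  set σ : X → ℝ := fun x => ∑' p, Set.indicator R (fun q => Ψ q x) p with hσ
  have hσc : Continuous σ := hcont R
  have hindsummable : ∀ x, Summable (fun p => Set.indicator R (fun q => Ψ q x) p) :=
    fun x => Summable.of_nonneg_of_le
      (fun p => Set.indicator_nonneg (fun q _ => hΨ0 q x) p)
      (fun p => Set.indicator_le_self' (fun q _ => hΨ0 q x) p) (hΨsummable x)
  have hhs : ∀ x, HasSum (fun V : 𝒱 => Ψ (rep V) x) (σ x) := by
    intro x
    have h1 : HasSum (fun p => Set.indicator R (fun q => Ψ q x) p) (σ x) :=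
      (hindsummable x).hasSum
    have h2 := (hrepinj.hasSum_iff
      (fun p hp => Set.indicator_of_notMem hp _)).2 h1
    have h3 : (fun V : 𝒱 => Ψ (rep V) x) =
        ((fun p => Set.indicator R (fun q => Ψ q x) p) ∘ rep) := by
      funext V
      exact (Set.indicator_of_mem (Set.mem_range_self V) (fun q => Ψ q x)).symm
    rw [h3]
    exact h2
  have hσpos : ∀ x, 0 < σ x := by
    intro x
    obtain ⟨p, hp⟩ := hcover x
    have hVmem : Function.support (fun x => Ψ p x) ∈ 𝒱 := ⟨⟨p, rfl⟩, ⟨x, hp⟩⟩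
    have h1 : Ψ (rep ⟨_, hVmem⟩) x ≠ 0 := (hrepmem ⟨_, hVmem⟩ x).1 hp
    have h2 : Ψ (rep ⟨_, hVmem⟩) x ≤ σ x :=
      le_hasSum (hhs x) ⟨_, hVmem⟩ (fun W _ => hΨ0 _ x)
    exact lt_of_lt_of_le (lt_of_le_of_ne (hΨ0 _ x) (Ne.symm h1)) h2
  refine ⟨𝒱, ?_, ⟨fun V x => Ψ (rep V) x / σ x, ?_, ?_, ?_, ?_, ?_⟩, ?_, ?_⟩
  · -- cover
    apply Set.eq_univ_of_forall
    intro x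
    obtain ⟨p, hp⟩ := hcover x
    exact ⟨Function.support (fun x => Ψ p x), ⟨⟨p, rfl⟩, ⟨x, hp⟩⟩, hp⟩
  · -- continuity
    exact fun V => (hΨc (rep V)).div hσc (fun x => (hσpos x).ne')
  · -- nonneg
    exact fun V x => div_nonneg (hΨ0 _ x) (hσpos x).le
  · -- le one
    intro V x
    rw [div_le_one (hσpos x)]
    exact le_hasSum (hhs x) V (fun W _ => hΨ0 _ x)
  · -- support
    intro V x hx
    have : Ψ (rep V) x ≠ 0 := by
      intro h
      apply hx
      simp only [h, zero_div]
    exact (hrepmem V x).2 this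
  · -- hasSum one
    intro x
    have := (hhs x).div_const (σ x)
    rwa [div_self (hσpos x).ne'] at this
  · -- nonempty
    exact fun V hV => hV.2
  · -- barycentric property
    intro x
    have hP : ∃ n, ∃ F, Ψ (F, n) x ≠ 0 := by
      obtain ⟨p, hp⟩ := hcover x
      exact ⟨p.2, p.1, by rwa [Prod.mk.eta]⟩
    obtain ⟨F₀, hF₀⟩ := Nat.find_spec hP
    have hF₀ne : F₀.Nonempty := by
      rcases F₀.eq_empty_or_nonempty with h | h
      · exfalso
        have h1 := ((hΨne (F₀, Nat.find hP) x).1 hF₀).1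
        rw [h, Finset.sum_empty] at h1
        have h2 := hd_le_one (F₀, Nat.find hP)
        linarith
      · exact h
    obtain ⟨U₀, hU₀⟩ := hF₀ne
    refine ⟨U₀, U₀.2, ?_⟩
    intro V hV hxV
    obtain ⟨⟨p, hpV⟩, -⟩ := hV
    have hpx : Ψ p x ≠ 0 := by rw [← hpV] at hxV; exact hxV
    have hn : Nat.find hP ≤ p.2 := Nat.find_min' hP ⟨p.1, by rwa [Prod.mk.eta]⟩
    have hsub : F₀ ⊆ p.1 := hchain x hF₀ (by rwa [Prod.mk.eta]) hn
    intro y hy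
    have hpy : Ψ p y ≠ 0 := by rw [← hpV] at hy; exact hy
    have hd1 : d p < ρ U₀ y := ((hΨne p y).1 hpy).2 U₀ (hsub hU₀)
    have hy0 : ρ U₀ y ≠ 0 := by
      have := hd_pos p
      intro h
      rw [h] at hd1
      linarith
    exact hsup U₀ hy0

/-- Continuity of a finite pointwise sup. -/
lemma cont_sup' {Y : Type*} (φ : Y → X → ℝ) (hc : ∀ U, Continuous (φ U))
    (t : Finset Y) (ht : t.Nonempty) :
    Continuous (fun y => t.sup' ht (fun U => φ U y)) := by
  induction ht using Finset.Nonempty.cons_induction with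
  | singleton a => simpa using hc a
  | cons a s h hs ih =>
      have heq : (fun y => (Finset.cons a s h).sup' (Finset.cons_nonempty h) (fun U => φ U y)) =
          (fun y => max (φ a y) (s.sup' hs (fun U => φ U y))) := by
        funext y
        exact Finset.sup'_cons hs _
      rw [heq]
      exact (hc a).max ih

/-- STEP 1: a subordinated partition of unity can be replaced by a point-finite
one (subordinated to the same cover). -/
lemma step1 (φ : 𝒰 → X → ℝ)
    (hc : ∀ U, Continuous (φ U)) (h0 : ∀ U x, 0 ≤ φ U x)
    (hsupp : ∀ U : 𝒰, Function.support (φ U) ⊆ (U : Set X))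
    (hsum : ∀ x, HasSum (fun U => φ U x) 1) :
    ∃ ρ : 𝒰 → X → ℝ, (∀ U, Continuous (ρ U)) ∧ (∀ U x, 0 ≤ ρ U x) ∧
      (∀ U x, ρ U x ≤ 1) ∧ (∀ x, HasSum (fun U => ρ U x) 1) ∧
      (∀ x, {U | ρ U x ≠ 0}.Finite) ∧
      (∀ U : 𝒰, Function.support (ρ U) ⊆ (U : Set X)) := by
  classical
  set μ : X → ℝ := fun x => ⨆ U, φ U x with hμ
  have hbdd : ∀ x, BddAbove (Set.range fun U => φ U x) := by
    intro x
    refine ⟨1, ?_⟩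
    rintro _ ⟨U, rfl⟩
    exact le_hasSum (hsum x) U (fun j _ => h0 j x)
  have hexpos : ∀ x : X, ∃ U, 0 < φ U x := by
    intro x
    by_contra h
    push_neg at h
    have h' : (fun U => φ U x) = (fun _ => (0:ℝ)) :=
      funext fun U => le_antisymm (h U) (h0 U x)
    have hz : HasSum (fun U : 𝒰 => φ U x) 0 := by
      rw [h']
      exact hasSum_zero
    exact one_ne_zero ((hsum x).unique hz)
  have hφle : ∀ U x, φ U x ≤ μ x := fun U x => le_ciSup (hbdd x) U
  have hμpos : ∀ x, 0 < μ x := by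
    intro x
    obtain ⟨U, hU⟩ := hexpos x
    exact lt_of_lt_of_le hU (hφle U x)
  -- local structure around each point
  have hloc : ∀ x₀ : X, ∃ (t : Finset 𝒰) (ht : t.Nonempty) (N : Set X),
      IsOpen N ∧ x₀ ∈ N ∧
      (∀ y ∈ N, ∀ U ∉ t, φ U y < μ x₀ / 4) ∧
      (∀ y ∈ N, ∃ U ∈ t, μ x₀ / 2 < φ U y) := by
    intro x₀
    have hb : 0 < μ x₀ := hμpos x₀
    haveI : Nonempty 𝒰 := ⟨(hexpos x₀).choose⟩
    obtain ⟨U₀, hU₀⟩ : ∃ U, 3 * μ x₀ / 4 < φ U x₀ :=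
      exists_lt_of_lt_ciSup (by rw [hμ] at hb ⊢; linarith)
    obtain ⟨t₀, ht₀⟩ := approx φ hsum x₀ (show (0:ℝ) < μ x₀ / 4 by linarith)
    refine ⟨insert U₀ t₀, ⟨U₀, Finset.mem_insert_self _ _⟩,
      {y | 1 - ∑ U ∈ insert U₀ t₀, φ U y < μ x₀ / 4} ∩ {y | μ x₀ / 2 < φ U₀ y},
      ?_, ⟨?_, ?_⟩, ?_, ?_⟩
    · exact (isOpen_lt (continuous_const.sub
        (continuous_finset_sum _ fun U _ => hc U)) continuous_const).inter
        (isOpen_lt continuous_const (hc U₀))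
    · have hmono : ∑ U ∈ t₀, φ U x₀ ≤ ∑ U ∈ insert U₀ t₀, φ U x₀ :=
        Finset.sum_le_sum_of_subset_of_nonneg (Finset.subset_insert _ _)
          (fun U _ _ => h0 U x₀)
      show 1 - ∑ U ∈ insert U₀ t₀, φ U x₀ < μ x₀ / 4
      linarith
    · show μ x₀ / 2 < φ U₀ x₀
      linarith
    · intro y hy U hU
      have := off_le φ h0 hsum y (insert U₀ t₀) U hU
      have h2 := hy.1
      simp only [Set.mem_setOf_eq] at h2
      linarith
    · intro y hy
      exact ⟨U₀, Finset.mem_insert_self _ _, hy.2⟩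
  have hμc : Continuous μ := by
    rw [continuous_iff_continuousAt]
    intro x₀
    obtain ⟨t, ht, N, hNo, hxN, hsmall, hbig⟩ := hloc x₀
    have key : ∀ y ∈ N, μ y = t.sup' ht (fun U => φ U y) := by
      intro y hy
      obtain ⟨U', hU't, hU'⟩ := hbig y hy
      apply le_antisymm
      · haveI : Nonempty 𝒰 := ⟨U'⟩
        apply ciSup_le
        intro U
        by_cases hUt : U ∈ t
        · exact Finset.le_sup' (fun U => φ U y) hUt
        · have h1 := hsmall y hy U hUt
          have h2 : φ U' y ≤ t.sup' ht (fun U => φ U y) :=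
            Finset.le_sup' (fun U => φ U y) hU't
          have h3 := hμpos x₀
          linarith
      · exact Finset.sup'_le ht _ fun U _ => hφle U y
    exact ((cont_sup' φ hc t ht).continuousAt).congr
      (Filter.eventuallyEq_of_mem (hNo.mem_nhds hxN) fun y hy => (key y hy).symm)
  set η : 𝒰 → X → ℝ := fun U x => max 0 (φ U x - μ x / 2) with hη
  have hηc : ∀ U, Continuous (η U) :=
    fun U => continuous_const.max ((hc U).sub (hμc.div_const 2))
  have hη0 : ∀ U x, 0 ≤ η U x := fun U x => le_max_left _ _
  have hηle : ∀ U x, η U x ≤ φ U x := by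
    intro U x
    apply max_le (h0 U x)
    have := (hμpos x).le
    linarith
  have hηne : ∀ U x, η U x ≠ 0 ↔ μ x / 2 < φ U x := by
    intro U x
    rw [hη]
    simp only [max_zero_ne_zero_iff]
    constructor <;> intro h <;> linarith
  have hηfin : ∀ x, {U | η U x ≠ 0}.Finite := by
    intro x
    by_contra hinf
    obtain ⟨n, hn⟩ := exists_nat_gt (2 / μ x)
    obtain ⟨T, hTsub, hTcard⟩ := Set.Infinite.exists_subset_card_eq hinf n
    have h1 : (n : ℝ) * (μ x / 2) ≤ ∑ U ∈ T, φ U x := by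
      calc (n : ℝ) * (μ x / 2) = ∑ _U ∈ T, μ x / 2 := by
            rw [Finset.sum_const, hTcard, nsmul_eq_mul]
        _ ≤ ∑ U ∈ T, φ U x := by
            apply Finset.sum_le_sum
            intro U hU
            have : η U x ≠ 0 := hTsub hU
            exact ((hηne U x).1 this).le
    have h2 : ∑ U ∈ T, φ U x ≤ 1 := subsum_le_one φ h0 hsum x T
    have h3 : (2 / μ x) * (μ x / 2) < (n : ℝ) * (μ x / 2) :=
      mul_lt_mul_of_pos_right hn (by have := hμpos x; positivity)
    have h4 : (2 / μ x) * (μ x / 2) = 1 := by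
      rw [div_mul_div_comm, mul_comm]
      exact div_self (by have := hμpos x; positivity)
    linarith
  have hηhs : ∀ x, HasSum (fun U => η U x) (∑ U ∈ (hηfin x).toFinset, η U x) := by
    intro x
    apply hasSum_sum_of_ne_finset_zero
    intro U hU
    by_contra h
    exact hU ((hηfin x).mem_toFinset.2 h)
  set σ : X → ℝ := fun x => ∑' U, η U x with hσ
  have hσhs : ∀ x, HasSum (fun U => η U x) (σ x) :=
    fun x => (hηhs x).summable.hasSum
  have hσpos : ∀ x, 0 < σ x := by
    intro x
    haveI : Nonempty 𝒰 := ⟨(hexpos x).choose⟩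
    obtain ⟨U, hU⟩ : ∃ U, μ x / 2 < φ U x := by
      apply exists_lt_of_lt_ciSup
      rw [hμ] at *
      have := hμpos x
      simp only [hμ] at this ⊢
      linarith
    have h1 : 0 < η U x := lt_max_iff.2 (Or.inr (by linarith))
    exact lt_of_lt_of_le h1 (le_hasSum (hσhs x) U (fun j _ => hη0 j x))
  have hσc : Continuous σ := by
    rw [continuous_iff_continuousAt]
    intro x₀
    obtain ⟨t, ht, N, hNo, hxN, hsmall, hbig⟩ := hloc x₀
    have key : ∀ y ∈ N, σ y = ∑ U ∈ t, η U y := by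
      intro y hy
      apply tsum_eq_sum
      intro U hU
      obtain ⟨U', hU't, hU'⟩ := hbig y hy
      have h1 := hsmall y hy U hU
      have h2 : μ x₀ / 2 < μ y := lt_of_lt_of_le hU' (hφle U' y)
      rw [hη]
      apply max_eq_left
      linarith
    exact ((continuous_finset_sum t fun U _ => hηc U).continuousAt).congr
      (Filter.eventuallyEq_of_mem (hNo.mem_nhds hxN) fun y hy => (key y hy).symm)
  refine ⟨fun U x => η U x / σ x, ?_, ?_, ?_, ?_, ?_, ?_⟩
  · exact fun U => (hηc U).div hσc (fun x => (hσpos x).ne')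
  · exact fun U x => div_nonneg (hη0 U x) (hσpos x).le
  · intro U x
    rw [div_le_one (hσpos x)]
    exact le_hasSum (hσhs x) U (fun j _ => hη0 j x)
  · intro x
    have := (hσhs x).div_const (σ x)
    rwa [div_self (hσpos x).ne'] at this
  · intro x
    apply (hηfin x).subset
    intro U hU
    simp only [Set.mem_setOf_eq] at hU ⊢
    intro h
    apply hU
    rw [h, zero_div]
  · intro U x hx
    apply hsupp U
    simp only [Function.mem_support]
    intro h
    apply hx
    have : η U x = 0 := by
      rw [hη]
      apply max_eq_left
      have := (hμpos x).le
      rw [h]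
      linarith
    simp [this]


/-- A cover with a subordinated partition of unity has a "barycentric
refinement" consisting of nonempty sets, with a subordinated partition of
unity. -/
lemma bary_lemma (𝒰 : Set (Set X)) (hPU : SubordPU 𝒰) :
    ∃ 𝒱 : Set (Set X), ⋃₀ 𝒱 = Set.univ ∧ SubordPU 𝒱 ∧ (∀ V ∈ 𝒱, V.Nonempty) ∧
      (∀ x : X, ∃ U ∈ 𝒰, ∀ V ∈ 𝒱, x ∈ V → V ⊆ U) := by
  obtain ⟨φ, hc, h0, h1, hsupp, hsum⟩ := hPU
  obtain ⟨ρ, hc', h0', h1', hsum', hpf', hsupp'⟩ := step1 φ hc h0 hsupp hsum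
  exact step2 ρ hc' h0' h1' hsum' hpf' hsupp'

end Construction

/-- A cover admitting a subordinated continuous partition of unity
has a star refinement (which is again a cover) admitting a subordinated
continuous partition of unity. -/
theorem stmt_1 {X : Type*} [TopologicalSpace X] (𝒰 : Set (Set X))
    (hcover : ⋃₀ 𝒰 = Set.univ) (hPU : SubordPU 𝒰) :
    ∃ 𝒱 : Set (Set X), ⋃₀ 𝒱 = Set.univ ∧ SubordPU 𝒱 ∧ Refines (stFam 𝒱 𝒱) 𝒰 := by
  obtain ⟨𝒱, hVcov, hVPU, hVne, hVbary⟩ := bary_lemma 𝒰 hPU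
  obtain ⟨𝒲, hWcov, hWPU, hWne, hWbary⟩ := bary_lemma 𝒱 hVPU
  refine ⟨𝒲, hWcov, hWPU, ?_⟩
  rintro S ⟨W, hW, rfl⟩
  obtain ⟨x, hx⟩ := hWne W hW
  obtain ⟨U, hU𝒰, hU⟩ := hVbary x
  refine ⟨U, hU𝒰, ?_⟩
  intro z hz
  rcases hz with hz | hz
  · -- z ∈ W
    obtain ⟨V, hV, hVprop⟩ := hWbary x
    have hWV : W ⊆ V := hVprop W hW hx
    exact hU V hV (hWV hx) (hWV hz)
  · -- z in the union of members of 𝒲 meeting W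
    simp only [Set.mem_iUnion] at hz
    obtain ⟨W', ⟨hW'mem, y, hyW', hyW⟩, hzW'⟩ := hz
    obtain ⟨V, hV, hVprop⟩ := hWbary y
    have h1 : W' ⊆ V := hVprop W' hW'mem hyW'
    have h2 : W ⊆ V := hVprop W hW hyW
    exact hU V hV (h2 hx) (h1 hzW')
end

section
/- Let X and Y be sets with bounded structures and let h : X → Y be a map that is proper (preimages of bounded sets are bounded) and maps bounded sets to bounded sets. Then for every weakly bounded subset W of Y, the preimage h⁻¹(W) is weakly bounded in X. -/
/-- A bounded structure on a set `X`. -/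
structure BoundedStructure (X : Type*) where
  sets : Set (Set X)
  singleton_mem : ∀ x : X, ({x} : Set X) ∈ sets
  subset_mem : ∀ A ∈ sets, ∀ B : Set X, B ⊆ A → B ∈ sets
  union_mem : ∀ A ∈ sets, ∀ B ∈ sets, (A ∩ B).Nonempty → A ∪ B ∈ sets

/-- `B` is weakly bounded: its intersection with every `ℬ`-component
(the component of `x` being `{y | {x,y} ∈ ℬ}`) is bounded. -/
def BoundedStructure.WeaklyBounded {X : Type*} (ℬ : BoundedStructure X)
    (B : Set X) : Prop :=
  ∀ x : X, B ∩ {y | ({x, y} : Set X) ∈ ℬ.sets} ∈ ℬ.sets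

/-- for a proper map sending bounded sets to bounded sets,
preimages of weakly bounded sets are weakly bounded. -/
theorem stmt_3 {X Y : Type*} (ℬX : BoundedStructure X) (ℬY : BoundedStructure Y)
    (h : X → Y)
    (hproper : ∀ B ∈ ℬY.sets, h ⁻¹' B ∈ ℬX.sets)
    (hbdd : ∀ B ∈ ℬX.sets, h '' B ∈ ℬY.sets)
    (W : Set Y) (hW : ℬY.WeaklyBounded W) :
    ℬX.WeaklyBounded (h ⁻¹' W) := by
  intro x
  apply ℬX.subset_mem (h ⁻¹' (W ∩ {y | ({h x, y} : Set Y) ∈ ℬY.sets})) (hproper _ (hW (h x)))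
  rintro z ⟨hz, hzc⟩
  refine ⟨hz, ?_⟩
  have := hbdd _ hzc
  simpa [Set.image_insert_eq, Set.image_singleton] using this
end

section
/- Let X be a set with a large scale structure, with its induced bounded structure. If B ⊆ X is weakly bounded and 𝒰 is a uniformly bounded family, then st(B,𝒰) is weakly bounded. -/
/-- A large scale structure on `X`: a collection of families of subsets
(the uniformly bounded families) containing the family of singletons,
closed under refinement and under stars. -/
structure LargeScaleStructure (X : Type*) where
  fams : Set (Set (Set X))
  singletons_mem : (Set.range fun x : X => ({x} : Set X)) ∈ fams
  refines_mem : ∀ 𝒰 ∈ fams, ∀ 𝒱 : Set (Set X), Refines 𝒱 𝒰 → 𝒱 ∈ fams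
  star_mem : ∀ 𝒰 ∈ fams, ∀ 𝒱 ∈ fams, stFam 𝒰 𝒱 ∈ fams

/-- A set is bounded if it is a singleton or is contained in a member of some
uniformly bounded family. -/
def LSBounded {X : Type*} (ℒ : LargeScaleStructure X) (B : Set X) : Prop :=
  (∃ x : X, B = {x}) ∨ ∃ 𝒰 ∈ ℒ.fams, ∃ U ∈ 𝒰, B ⊆ U

/-- A set is weakly bounded if its intersection with every component of the
induced bounded structure is bounded. -/
def LSWeaklyBounded {X : Type*} (ℒ : LargeScaleStructure X) (B : Set X) : Prop :=
  ∀ x : X, LSBounded ℒ (B ∩ {y | LSBounded ℒ ({x, y} : Set X)})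

-- normalized form
lemma lsb_iff {X : Type*} (ℒ : LargeScaleStructure X) (B : Set X) :
    LSBounded ℒ B ↔ ∃ 𝒰 ∈ ℒ.fams, ∃ U ∈ 𝒰, B ⊆ U := by
  constructor
  · rintro (⟨x, rfl⟩ | h)
    · exact ⟨_, ℒ.singletons_mem, {x}, ⟨x, rfl⟩, subset_rfl⟩
    · exact h
  · exact Or.inr

lemma lsb_sub {X : Type*} {ℒ : LargeScaleStructure X} {A B : Set X}
    (hA : LSBounded ℒ A) (h : B ⊆ A) : LSBounded ℒ B := by
  rw [lsb_iff] at hA ⊢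
  obtain ⟨𝒰, h𝒰, U, hU, hAU⟩ := hA
  exact ⟨𝒰, h𝒰, U, hU, h.trans hAU⟩

lemma lsb_union {X : Type*} {ℒ : LargeScaleStructure X} {A A' : Set X}
    (hA : LSBounded ℒ A) (hA' : LSBounded ℒ A') (hne : (A ∩ A').Nonempty) :
    LSBounded ℒ (A ∪ A') := by
  rw [lsb_iff] at hA hA' ⊢
  obtain ⟨𝒰, h𝒰, U, hU, hAU⟩ := hA
  obtain ⟨𝒱, h𝒱, V, hV, hAV⟩ := hA'
  refine ⟨stFam 𝒱 𝒰, ℒ.star_mem 𝒱 h𝒱 𝒰 h𝒰, st V 𝒰, ⟨V, hV, rfl⟩, ?_⟩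
  rintro z (hz | hz)
  · right
    refine Set.mem_biUnion ⟨hU, ?_⟩ (hAU hz)
    obtain ⟨w, hw, hw'⟩ := hne
    exact ⟨w, hAU hw, hAV hw'⟩
  · exact Or.inl (hAV hz)

/-- the star of a weakly bounded set with respect to a uniformly
bounded family is weakly bounded. -/
theorem stmt_4 {X : Type*} (ℒ : LargeScaleStructure X) (B : Set X)
    (hB : LSWeaklyBounded ℒ B) (𝒰 : Set (Set X)) (h𝒰 : 𝒰 ∈ ℒ.fams) :
    LSWeaklyBounded ℒ (st B 𝒰) := by
  intro x
  set C : Set X := {y | LSBounded ℒ ({x, y} : Set X)} with hC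
  -- component is closed under bounded sets meeting it
  have hcomp : ∀ U : Set X, LSBounded ℒ U → (U ∩ C).Nonempty → U ⊆ C := by
    rintro U hUb ⟨y, hyU, hyC⟩ z hz
    have : LSBounded ℒ (({x, y} : Set X) ∪ U) :=
      lsb_union hyC hUb ⟨y, Or.inr rfl, hyU⟩
    refine lsb_sub this ?_
    rintro w (rfl | rfl)
    · exact Or.inl (Or.inl rfl)
    · exact Or.inr hz
  set D := B ∩ C with hD
  have hDb : LSBounded ℒ D := hB x
  rw [lsb_iff] at hDb
  obtain ⟨𝒱, h𝒱, V, hV, hDV⟩ := hDb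
  have key : st B 𝒰 ∩ C ⊆ st V 𝒰 := by
    rintro z ⟨hz, hzC⟩
    rcases hz with hz | hz
    · exact Or.inl (hDV ⟨hz, hzC⟩)
    · simp only [Set.mem_iUnion] at hz
      obtain ⟨U, ⟨hU𝒰, hUB⟩, hzU⟩ := hz
      have hUb : LSBounded ℒ U := Or.inr ⟨𝒰, h𝒰, U, hU𝒰, subset_rfl⟩
      have hUC : U ⊆ C := hcomp U hUb ⟨z, hzU, hzC⟩
      obtain ⟨y, hyU, hyB⟩ := hUB
      right
      refine Set.mem_biUnion ⟨hU𝒰, ⟨y, hyU, hDV ⟨hyB, hUC hyU⟩⟩⟩ hzU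
  refine lsb_sub (B := st B 𝒰 ∩ C) ?_ key
  exact Or.inr ⟨stFam 𝒱 𝒰, ℒ.star_mem 𝒱 h𝒱 𝒰 h𝒰, st V 𝒰, ⟨V, hV, rfl⟩, subset_rfl⟩
end

section
/- Let X be a set with a large scale structure (with its induced bounded structure) and let Y be a metric space. A function f : X → Y is slowly oscillating if and only if for every uniformly bounded family 𝒰 on X and every ε > 0 there is a weakly bounded set B ⊆ X such that diam f(U ∖ B) ≤ ε for every U ∈ 𝒰. -/
/-- `f` is slowly oscillating: for every uniformly bounded family `𝒰` and every
`ε > 0` there is a weakly bounded `B` such that `diam f(U) ≤ ε` for every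
`U ∈ 𝒰` meeting `X ∖ B`. -/
def SlowlyOscillating {X Y : Type*} [PseudoMetricSpace Y]
    (ℒ : LargeScaleStructure X) (f : X → Y) : Prop :=
  ∀ 𝒰 ∈ ℒ.fams, ∀ ε : ℝ, 0 < ε → ∃ B : Set X, LSWeaklyBounded ℒ B ∧
    ∀ U ∈ 𝒰, (U \ B).Nonempty → ∀ x ∈ U, ∀ y ∈ U, dist (f x) (f y) ≤ ε

lemma subset_st {X : Type*} (A : Set X) (𝒰 : Set (Set X)) : A ⊆ st A 𝒰 :=
  Set.subset_union_left

lemma st_mono {X : Type*} {A A' : Set X} (𝒰 : Set (Set X)) (h : A ⊆ A') :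
    st A 𝒰 ⊆ st A' 𝒰 := by
  intro z hz
  rcases hz with hz | hz
  · exact Or.inl (h hz)
  · obtain ⟨U, ⟨hU, b, hbU, hbA⟩, hzU⟩ := Set.mem_iUnion₂.1 hz
    exact Or.inr (Set.mem_iUnion₂.2 ⟨U, ⟨hU, b, hbU, h hbA⟩, hzU⟩)

lemma mem_subset_st {X : Type*} {A U : Set X} {𝒰 : Set (Set X)}
    (hU : U ∈ 𝒰) (h : (U ∩ A).Nonempty) : U ⊆ st A 𝒰 := by
  intro z hz
  exact Or.inr (Set.mem_iUnion₂.2 ⟨U, ⟨hU, h⟩, hz⟩)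

lemma bounded_subset {X : Type*} (ℒ : LargeScaleStructure X) (x₀ : X)
    {A B : Set X} (hAB : A ⊆ B) (hB : LSBounded ℒ B) : LSBounded ℒ A := by
  rcases hB with ⟨x, rfl⟩ | ⟨𝒰, h𝒰, U, hU, hBU⟩
  · exact Or.inr ⟨_, ℒ.singletons_mem, {x}, ⟨x, rfl⟩, hAB⟩
  · exact Or.inr ⟨𝒰, h𝒰, U, hU, hAB.trans hBU⟩

lemma bounded_st {X : Type*} (ℒ : LargeScaleStructure X) {B : Set X}
    {𝒰 : Set (Set X)} (h𝒰 : 𝒰 ∈ ℒ.fams) (hB : LSBounded ℒ B) :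
    LSBounded ℒ (st B 𝒰) := by
  rcases hB with ⟨x, rfl⟩ | ⟨𝒱, h𝒱, V, hV, hBV⟩
  · exact Or.inr ⟨stFam (Set.range fun x : X => ({x} : Set X)) 𝒰,
      ℒ.star_mem _ ℒ.singletons_mem _ h𝒰, st {x} 𝒰, ⟨{x}, ⟨x, rfl⟩, rfl⟩,
      le_refl _⟩
  · exact Or.inr ⟨stFam 𝒱 𝒰, ℒ.star_mem _ h𝒱 _ h𝒰, st V 𝒰, ⟨V, hV, rfl⟩,
      st_mono 𝒰 hBV⟩

lemma bounded_pair_of_mem {X : Type*} (ℒ : LargeScaleStructure X)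
    {U : Set X} {𝒰 : Set (Set X)} (h𝒰 : 𝒰 ∈ ℒ.fams) (hU : U ∈ 𝒰)
    {a b : X} (ha : a ∈ U) (hb : b ∈ U) : LSBounded ℒ ({a, b} : Set X) :=
  Or.inr ⟨𝒰, h𝒰, U, hU, by intro z hz; rcases hz with rfl | rfl <;> assumption⟩

lemma bounded_pair_trans {X : Type*} (ℒ : LargeScaleStructure X)
    {a b c : X} (h₁ : LSBounded ℒ ({a, b} : Set X))
    (h₂ : LSBounded ℒ ({b, c} : Set X)) : LSBounded ℒ ({a, c} : Set X) := by
  rcases h₁ with ⟨x, hx⟩ | ⟨𝒰, h𝒰, U, hU, hsub₁⟩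
  · have hab : a = b := by
      have ha : a ∈ ({x} : Set X) := hx ▸ (by simp)
      have hb : b ∈ ({x} : Set X) := hx ▸ (by simp)
      simp_all
    exact hab ▸ h₂
  rcases h₂ with ⟨x, hx⟩ | ⟨𝒱, h𝒱, V, hV, hsub₂⟩
  · have hbc : b = c := by
      have hb : b ∈ ({x} : Set X) := hx ▸ (by simp)
      have hc : c ∈ ({x} : Set X) := hx ▸ (by simp)
      simp_all
    exact Or.inr ⟨𝒰, h𝒰, U, hU, hbc ▸ hsub₁⟩
  · refine Or.inr ⟨stFam 𝒰 𝒱, ℒ.star_mem _ h𝒰 _ h𝒱, st U 𝒱, ⟨U, hU, rfl⟩, ?_⟩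
    intro z hz
    rcases hz with rfl | rfl
    · exact subset_st U 𝒱 (hsub₁ (by simp))
    · exact mem_subset_st hV ⟨b, hsub₂ (by simp), hsub₁ (by simp)⟩
        (hsub₂ (by simp))

lemma weakly_bounded_st {X : Type*} (ℒ : LargeScaleStructure X) {B : Set X}
    {𝒰 : Set (Set X)} (h𝒰 : 𝒰 ∈ ℒ.fams) (hB : LSWeaklyBounded ℒ B) :
    LSWeaklyBounded ℒ (st B 𝒰) := by
  intro x
  refine bounded_subset ℒ x ?_ (bounded_st ℒ h𝒰 (hB x))
  rintro z ⟨hz, hzc⟩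
  rcases hz with hz | hz
  · exact subset_st _ 𝒰 ⟨hz, hzc⟩
  · obtain ⟨U, ⟨hU, b, hbU, hbB⟩, hzU⟩ := Set.mem_iUnion₂.1 hz
    have hbc : LSBounded ℒ ({x, b} : Set X) :=
      bounded_pair_trans ℒ hzc (bounded_pair_of_mem ℒ h𝒰 hU hzU hbU)
    have hne : (U ∩ (B ∩ {y | LSBounded ℒ ({x, y} : Set X)})).Nonempty :=
      ⟨b, hbU, hbB, hbc⟩
    exact mem_subset_st hU hne hzU

/-- `f` is slowly oscillating iff for every uniformly bounded
family `𝒰` and `ε > 0` there is a weakly bounded `B` with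
`diam f(U ∖ B) ≤ ε` for all `U ∈ 𝒰`. -/
theorem stmt_5 {X Y : Type*} [MetricSpace Y] (ℒ : LargeScaleStructure X)
    (f : X → Y) :
    SlowlyOscillating ℒ f ↔
      ∀ 𝒰 ∈ ℒ.fams, ∀ ε : ℝ, 0 < ε → ∃ B : Set X, LSWeaklyBounded ℒ B ∧
        ∀ U ∈ 𝒰, ∀ x ∈ U \ B, ∀ y ∈ U \ B, dist (f x) (f y) ≤ ε := by
  constructor
  · intro h 𝒰 h𝒰 ε hε
    obtain ⟨B, hBw, hB⟩ := h 𝒰 h𝒰 ε hε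
    exact ⟨B, hBw, fun U hU x hx y hy =>
      hB U hU ⟨x, hx⟩ x hx.1 y hy.1⟩
  · intro h 𝒰 h𝒰 ε hε
    obtain ⟨B, hBw, hB⟩ := h 𝒰 h𝒰 ε hε
    refine ⟨st B 𝒰, weakly_bounded_st ℒ h𝒰 hBw, ?_⟩
    rintro U hU ⟨z, hzU, hzB⟩ x hx y hy
    have hUB : U ∩ B = ∅ := by
      by_contra hne
      exact hzB (mem_subset_st hU (Set.nonempty_iff_ne_empty.2 hne) hzU)
    have hx2 : x ∈ U \ B := ⟨hx, fun hxB => by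
      rw [Set.eq_empty_iff_forall_notMem] at hUB; exact hUB x ⟨hx, hxB⟩⟩
    have hy2 : y ∈ U \ B := ⟨hy, fun hyB => by
      rw [Set.eq_empty_iff_forall_notMem] at hUB; exact hUB y ⟨hy, hyB⟩⟩
    exact hB U hU x hx2 y hy2
end

section
/- Let (X,d) be a proper metric space (closed bounded sets are compact), let ℬ be the collection of precompact subsets of X, and let 𝒞 = C₀(X) be the collection of continuous functions X → ℂ vanishing at infinity. Then a family 𝒰 of subsets of X is uniformly (𝒞,ℬ)-bounded if and only if st(B,𝒰) is precompact for every precompact B ⊆ X. (That is, LS(𝒞,ℬ) coincides with the maximal large scale structure on X whose bounded sets are the precompact subsets of X.) -/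
/-- A family `𝒰` is uniformly `(𝒞,ℬ)`-bounded, where the predicate `WB`
singles out the weakly bounded sets of the bounded structure `ℬ`:
(1) stars of weakly bounded sets are weakly bounded; (2) for every weakly
bounded `B`, every `f ∈ 𝒞` and `ε > 0` there is a weakly bounded `B' ⊇ B`
with `diam f(U ∖ B') ≤ ε` for all `U ∈ 𝒰`. -/
def UnifCB {X : Type*} (WB : Set X → Prop) (𝒞 : Set (X → ℂ))
    (𝒰 : Set (Set X)) : Prop :=
  (∀ B : Set X, WB B → WB (st B 𝒰)) ∧
  ∀ B : Set X, WB B → ∀ f ∈ 𝒞, ∀ ε : ℝ, 0 < ε →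
    ∃ B' : Set X, WB B' ∧ B ⊆ B' ∧
      ∀ U ∈ 𝒰, ∀ x ∈ U \ B', ∀ y ∈ U \ B', dist (f x) (f y) ≤ ε

/-- for a proper metric space `X`, with `ℬ` the precompact subsets
(= weakly bounded sets) and `𝒞 = C₀(X)` the continuous functions vanishing at
infinity, a family `𝒰` is uniformly `(𝒞,ℬ)`-bounded iff `st(B,𝒰)` is
precompact for every precompact `B`; i.e. `LS(𝒞,ℬ)` is the maximal large scale
structure whose bounded sets are the precompact sets. -/
theorem stmt_8 {X : Type*} [MetricSpace X] [ProperSpace X] (𝒰 : Set (Set X)) :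
    UnifCB (fun B : Set X => IsCompact (closure B))
        {f : X → ℂ | Continuous f ∧
          ∀ ε : ℝ, 0 < ε → ∃ K : Set X, IsCompact K ∧ ∀ x ∉ K, ‖f x‖ ≤ ε} 𝒰 ↔
      ∀ B : Set X, IsCompact (closure B) → IsCompact (closure (st B 𝒰)) := by
  constructor
  · exact fun h => h.1
  · intro h
    refine ⟨h, ?_⟩
    intro B hB f hf ε hε
    obtain ⟨K, hK, hKf⟩ := hf.2 (ε / 2) (by linarith)
    refine ⟨B ∪ K, ?_, Set.subset_union_left, ?_⟩
    · show IsCompact (closure (B ∪ K))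
      rw [closure_union]
      exact hB.union (by rwa [hK.isClosed.closure_eq])
    · intro U _ x hx y hy
      have hx' : ‖f x‖ ≤ ε / 2 := hKf x fun hxK => hx.2 (Set.mem_union_right _ hxK)
      have hy' : ‖f y‖ ≤ ε / 2 := hKf y fun hyK => hy.2 (Set.mem_union_right _ hyK)
      calc dist (f x) (f y) = ‖f x - f y‖ := dist_eq_norm _ _
        _ ≤ ‖f x‖ + ‖f y‖ := norm_sub_le _ _
        _ ≤ ε := by linarith
end

section
/- Let (X,d) be a metric space (with finite-valued metric), let ℬ be the collection of d-bounded subsets of X, and let 𝒞 be the collection of bounded continuous functions f : X → ℂ that are slowly oscillating with respect to the metric large scale structure, i.e., for all r > 0 and ε > 0 there is a bounded set B ⊆ X such that |f(x) − f(y)| ≤ ε whenever d(x,y) ≤ r and x, y ∉ B. Then a family 𝒰 of subsets of X is uniformly (𝒞,ℬ)-bounded if and only if sup_{U ∈ 𝒰} diam U < ∞. (That is, the metric large scale structure is reflective.) -/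
open Metric Bornology Set
section Stmt10Aux
variable {X : Type*} [MetricSpace X]

lemma abs_ciSup_sub_ciSup_le {a b : ℕ → ℝ} (ha : ∀ k, a k ≤ 1) (hb : ∀ k, b k ≤ 1)
    {e : ℝ} (h : ∀ k, |a k - b k| ≤ e) : |(⨆ k, a k) - ⨆ k, b k| ≤ e := by
  have hba : BddAbove (Set.range a) := ⟨1, by rintro _ ⟨k, rfl⟩; exact ha k⟩
  have hbb : BddAbove (Set.range b) := ⟨1, by rintro _ ⟨k, rfl⟩; exact hb k⟩
  rw [abs_sub_le_iff]
  constructor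
  · rw [sub_le_iff_le_add]
    refine ciSup_le fun k => ?_
    have h1 := (abs_le.1 (h k)).2
    have h2 := le_ciSup hbb k
    linarith
  · rw [sub_le_iff_le_add]
    refine ciSup_le fun k => ?_
    have h1 := (abs_le.1 (h k)).1
    have h2 := le_ciSup hba k
    linarith

noncomputable def Tseq (x₀ : X) (fa fb : ℝ → X) : ℕ → ℝ
  | 0 => 1
  | k+1 =>
    let t := Tseq x₀ fa fb k
    dist x₀ (fa (4*t)) + dist x₀ (fb (4*t)) +
      min (dist (fa (4*t)) (fb (4*t))) (dist (fa (4*t)) x₀) / 4 + t + 1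

variable (x₀ : X) (fa fb : ℝ → X)

noncomputable def cseq (k : ℕ) : X := fa (4 * Tseq x₀ fa fb k)
noncomputable def dseq (k : ℕ) : X := fb (4 * Tseq x₀ fa fb k)
noncomputable def Rseq (k : ℕ) : ℝ :=
  min (dist (cseq x₀ fa fb k) (dseq x₀ fa fb k)) (dist (cseq x₀ fa fb k) x₀) / 4

lemma Tseq_succ' (k : ℕ) :
    Tseq x₀ fa fb (k+1) = dist x₀ (cseq x₀ fa fb k) + dist x₀ (dseq x₀ fa fb k) +
      Rseq x₀ fa fb k + Tseq x₀ fa fb k + 1 := rfl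

lemma Rseq_nonneg (k : ℕ) : 0 ≤ Rseq x₀ fa fb k := by
  have h : (0:ℝ) ≤ min (dist (cseq x₀ fa fb k) (dseq x₀ fa fb k)) (dist (cseq x₀ fa fb k) x₀) :=
    le_min dist_nonneg dist_nonneg
  unfold Rseq; linarith

lemma Tseq_ge (k : ℕ) : (k : ℝ) + 1 ≤ Tseq x₀ fa fb k := by
  induction k with
  | zero => simp [Tseq]
  | succ k ih =>
    rw [Tseq_succ']
    have h1 := dist_nonneg (x := x₀) (y := cseq x₀ fa fb k)
    have h2 := dist_nonneg (x := x₀) (y := dseq x₀ fa fb k)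
    have h3 := Rseq_nonneg x₀ fa fb k
    push_cast
    linarith

lemma Tseq_one_le (k : ℕ) : 1 ≤ Tseq x₀ fa fb k := by
  have h1 := Tseq_ge x₀ fa fb k
  have h2 : (0:ℝ) ≤ k := Nat.cast_nonneg k
  linarith

lemma Tseq_mono : Monotone (Tseq x₀ fa fb) := by
  apply monotone_nat_of_le_succ
  intro k
  rw [Tseq_succ']
  have h1 := dist_nonneg (x := x₀) (y := cseq x₀ fa fb k)
  have h2 := dist_nonneg (x := x₀) (y := dseq x₀ fa fb k)
  have h3 := Rseq_nonneg x₀ fa fb k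
  linarith

lemma Tseq_succ_ge_c (k : ℕ) :
    dist x₀ (cseq x₀ fa fb k) + Rseq x₀ fa fb k ≤ Tseq x₀ fa fb (k+1) := by
  rw [Tseq_succ']
  have h2 := dist_nonneg (x := x₀) (y := dseq x₀ fa fb k)
  have h3 := Tseq_one_le x₀ fa fb k
  linarith

lemma Tseq_succ_ge_d (k : ℕ) :
    dist x₀ (dseq x₀ fa fb k) ≤ Tseq x₀ fa fb (k+1) := by
  rw [Tseq_succ']
  have h1 := dist_nonneg (x := x₀) (y := cseq x₀ fa fb k)
  have h3 := Rseq_nonneg x₀ fa fb k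
  have h4 := Tseq_one_le x₀ fa fb k
  linarith

lemma Rseq_le_cd (k : ℕ) : 4 * Rseq x₀ fa fb k ≤ dist (cseq x₀ fa fb k) (dseq x₀ fa fb k) := by
  have := min_le_left (dist (cseq x₀ fa fb k) (dseq x₀ fa fb k)) (dist (cseq x₀ fa fb k) x₀)
  unfold Rseq; linarith

lemma Rseq_le_cx (k : ℕ) : 4 * Rseq x₀ fa fb k ≤ dist (cseq x₀ fa fb k) x₀ := by
  have := min_le_right (dist (cseq x₀ fa fb k) (dseq x₀ fa fb k)) (dist (cseq x₀ fa fb k) x₀)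
  unfold Rseq; linarith

lemma exists_so (x₀ : X) (𝒰 : Set (Set X))
    (P : ∀ T : ℝ, ∃ U, U ∈ 𝒰 ∧ ∃ p, ∃ q, p ∈ U ∧ q ∈ U ∧ T ≤ dist p q ∧ T ≤ dist p x₀ ∧
      dist p x₀ ≤ dist q x₀) :
    ∃ f : X → ℝ, Continuous f ∧ (∀ x, |f x| ≤ 1) ∧
      (∀ r : ℝ, 0 < r → ∀ ε : ℝ, 0 < ε → ∃ B : Set X, Bornology.IsBounded B ∧
        ∀ x y : X, dist x y ≤ r → x ∉ B → y ∉ B → |f x - f y| ≤ ε) ∧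
      (∀ ρ : ℝ, ∃ U ∈ 𝒰, ∃ p ∈ U, ∃ q ∈ U, ρ < dist p x₀ ∧ ρ < dist q x₀ ∧ f p = 1 ∧ f q = 0) := by
  choose fU hU fp fq hpU hqU hpq hpx hqx using P
  set T := Tseq x₀ fp fq with hTdef
  set c := cseq x₀ fp fq with hcdef
  set d := dseq x₀ fp fq with hddef
  set R := Rseq x₀ fp fq with hRdef
  have hT1 : ∀ k, 1 ≤ T k := Tseq_one_le x₀ fp fq
  have hTge : ∀ k : ℕ, (k : ℝ) + 1 ≤ T k := Tseq_ge x₀ fp fq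
  have hmono : Monotone T := Tseq_mono x₀ fp fq
  have hcd : ∀ k, 4 * T k ≤ dist (c k) (d k) := fun k => hpq (4 * T k)
  have hcx : ∀ k, 4 * T k ≤ dist (c k) x₀ := fun k => hpx (4 * T k)
  have hdx : ∀ k, dist (c k) x₀ ≤ dist (d k) x₀ := fun k => hqx (4 * T k)
  have hRT : ∀ k, T k ≤ R k := by
    intro k
    have h1 := le_min (hcd k) (hcx k)
    rw [hRdef]
    unfold Rseq
    rw [← hcdef, ← hddef]
    linarith
  have hR1 : ∀ k, 1 ≤ R k := fun k => (hT1 k).trans (hRT k)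
  have hR0 : ∀ k, 0 < R k := fun k => lt_of_lt_of_le one_pos (hR1 k)
  have hRcd : ∀ k, 4 * R k ≤ dist (c k) (d k) := Rseq_le_cd x₀ fp fq
  have hRcx : ∀ k, 4 * R k ≤ dist (c k) x₀ := Rseq_le_cx x₀ fp fq
  have hsc : ∀ k, dist x₀ (c k) + R k ≤ T (k+1) := Tseq_succ_ge_c x₀ fp fq
  have hsd : ∀ k, dist x₀ (d k) ≤ T (k+1) := Tseq_succ_ge_d x₀ fp fq
  set bump : ℕ → X → ℝ := fun k x => max 0 (1 - dist x (c k) / R k) with hbump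
  set f : X → ℝ := fun x => ⨆ k, bump k x with hf
  have bump_nonneg : ∀ k x, 0 ≤ bump k x := fun k x => le_max_left _ _
  have bump_le_one : ∀ k x, bump k x ≤ 1 := by
    intro k x
    apply max_le zero_le_one
    have : 0 ≤ dist x (c k) / R k := div_nonneg dist_nonneg (hR0 k).le
    linarith
  have bdd : ∀ x, BddAbove (Set.range fun k => bump k x) :=
    fun x => ⟨1, by rintro _ ⟨k, rfl⟩; exact bump_le_one k x⟩
  have bump_zero : ∀ k x, R k ≤ dist x (c k) → bump k x = 0 := by
    intro k x hx0
    apply max_eq_left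
    rw [sub_nonpos, le_div_iff₀ (hR0 k)]
    linarith
  have bump_lip : ∀ k x y, |bump k x - bump k y| ≤ dist x y / R k := by
    intro k x y
    have h1 : |bump k x - bump k y| ≤ |(1 - dist x (c k) / R k) - (1 - dist y (c k) / R k)| := by
      rw [hbump]
      simp only
      rw [max_comm 0 (1 - dist x (c k) / R k), max_comm 0 (1 - dist y (c k) / R k)]
      exact abs_max_sub_max_le_abs _ _ _
    have h2 : (1 - dist x (c k) / R k) - (1 - dist y (c k) / R k)
        = (dist y (c k) - dist x (c k)) / R k := by ring
    rw [h2] at h1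
    refine h1.trans ?_
    rw [abs_div, abs_of_pos (hR0 k)]
    rw [div_le_div_iff_of_pos_right (hR0 k)]
    rw [abs_sub_comm]
    exact abs_dist_sub_le x y (c k)
  have dist_dc : ∀ j k, R k ≤ dist (d j) (c k) := by
    intro j k
    rcases lt_trichotomy j k with hjk | rfl | hkj
    · have h1 : dist (c k) x₀ ≤ dist (c k) (d j) + dist (d j) x₀ := dist_triangle _ _ _
      have h2 : dist x₀ (d j) ≤ T (j+1) := hsd j
      have h3 : T (j+1) ≤ T k := hmono hjk
      have h4 := hcx k
      have h5 := hRcx k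
      have h6 := hR1 k
      rw [dist_comm x₀ (d j)] at h2
      rw [dist_comm (c k) (d j)] at h1
      linarith
    · have h1 := hRcd j
      have h2 := hR1 j
      rw [dist_comm]
      linarith
    · have h1 : dist (d j) x₀ ≤ dist (d j) (c k) + dist (c k) x₀ := dist_triangle _ _ _
      have h2 : dist x₀ (c k) + R k ≤ T (k+1) := hsc k
      have h3 : T (k+1) ≤ T j := hmono hkj
      have h4 := (hcx j).trans (hdx j)
      have h5 := hT1 j
      rw [dist_comm x₀ (c k)] at h2
      linarith
  have f_eval : ∀ x, f x = ⨆ k, bump k x := fun x => rfl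
  have f_le_one : ∀ x, f x ≤ 1 := fun x => ciSup_le (fun k => bump_le_one k x)
  have f_nonneg : ∀ x, 0 ≤ f x := fun x => (bump_nonneg 0 x).trans (le_ciSup (bdd x) 0)
  have f_c : ∀ k, f (c k) = 1 := by
    intro k
    refine le_antisymm (f_le_one _) ?_
    have h1 : bump k (c k) = 1 := by
      rw [hbump]; simp [dist_self]
    calc (1:ℝ) = bump k (c k) := h1.symm
    _ ≤ f (c k) := le_ciSup (bdd _) k
  have f_d : ∀ j, f (d j) = 0 := by
    intro j
    have h : ∀ k, bump k (d j) = 0 := fun k => bump_zero k (d j) (dist_dc j k)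
    rw [f_eval]
    simp only [h]
    exact ciSup_const
  have f_lip : ∀ x y, |f x - f y| ≤ dist x y := by
    intro x y
    apply abs_ciSup_sub_ciSup_le (fun k => bump_le_one k x) (fun k => bump_le_one k y)
    intro k
    exact (bump_lip k x y).trans (div_le_self dist_nonneg (hR1 k))
  have f_cont : Continuous f := by
    apply LipschitzWith.continuous (K := 1)
    apply LipschitzWith.of_dist_le_mul
    intro x y
    rw [Real.dist_eq, NNReal.coe_one, one_mul]
    exact f_lip x y
  refine ⟨f, f_cont, fun x => abs_le.2 ⟨by linarith [f_nonneg x], f_le_one x⟩, ?_, ?_⟩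
  · intro r hr ε hε
    obtain ⟨K, hK⟩ := exists_nat_ge (r / ε)
    have hTK : r / ε ≤ T K := hK.trans (by linarith [hTge K])
    refine ⟨Metric.closedBall x₀ (T K), Metric.isBounded_closedBall, ?_⟩
    intro x y hxy hxB hyB
    rw [Metric.mem_closedBall, not_le] at hxB hyB
    apply abs_ciSup_sub_ciSup_le (fun k => bump_le_one k x) (fun k => bump_le_one k y)
    intro k
    rcases lt_or_ge k K with hkK | hkK
    · have hx0 : bump k x = 0 := by
        apply bump_zero
        have h1 : dist x x₀ ≤ dist x (c k) + dist (c k) x₀ := dist_triangle _ _ _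
        have h2 := hsc k
        have h3 : T (k+1) ≤ T K := hmono hkK
        rw [dist_comm x₀ (c k)] at h2
        linarith
      have hy0 : bump k y = 0 := by
        apply bump_zero
        have h1 : dist y x₀ ≤ dist y (c k) + dist (c k) x₀ := dist_triangle _ _ _
        have h2 := hsc k
        have h3 : T (k+1) ≤ T K := hmono hkK
        rw [dist_comm x₀ (c k)] at h2
        linarith
      rw [hx0, hy0]
      simpa using hε.le
    · refine (bump_lip k x y).trans ?_
      have hRk : r / ε ≤ R k := hTK.trans ((hmono hkK).trans (hRT k))
      have h1 : dist x y / R k ≤ r / R k := (div_le_div_iff_of_pos_right (hR0 k)).mpr hxy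
      have h2 : r ≤ R k * ε := (div_le_iff₀ hε).1 hRk
      have h3 : r / R k ≤ ε := (div_le_iff₀ (hR0 k)).2 (by linarith)
      linarith
  · intro ρ
    obtain ⟨n, hn⟩ := exists_nat_gt ρ
    have hc4 : ρ < dist (c n) x₀ := by
      have h1 := hcx n
      have h2 := hTge n
      have h3 : (0:ℝ) ≤ n := Nat.cast_nonneg n
      linarith
    refine ⟨fU (4 * T n), hU _, c n, hpU _, d n, hqU _, hc4, lt_of_lt_of_le hc4 (hdx n),
      f_c n, f_d n⟩
end Stmt10Aux


/-- for a metric space `X`, with `ℬ` the metrically bounded sets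
(= weakly bounded sets) and `𝒞` the bounded continuous functions that are
slowly oscillating with respect to the metric large scale structure, a family
`𝒰` is uniformly `(𝒞,ℬ)`-bounded iff `sup_{U ∈ 𝒰} diam U < ∞`;
i.e. the metric large scale structure is reflective. -/
theorem stmt_10 {X : Type*} [MetricSpace X] (𝒰 : Set (Set X)) :
    UnifCB (fun B : Set X => Bornology.IsBounded B)
        {f : X → ℂ | Continuous f ∧ (∃ M : ℝ, ∀ x, ‖f x‖ ≤ M) ∧
          ∀ r : ℝ, 0 < r → ∀ ε : ℝ, 0 < ε → ∃ B : Set X, Bornology.IsBounded B ∧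
            ∀ x y : X, dist x y ≤ r → x ∉ B → y ∉ B → dist (f x) (f y) ≤ ε} 𝒰 ↔
      ∃ M : ℝ, ∀ U ∈ 𝒰, ∀ x ∈ U, ∀ y ∈ U, dist x y ≤ M := by
  constructor
  · intro h
    by_contra hno
    push_neg at hno
    rcases isEmpty_or_nonempty X with hempty | hne
    · obtain ⟨U, _, x, _, _⟩ := hno 0
      exact (IsEmpty.false x).elim
    obtain ⟨x₀⟩ := hne
    choose gU hgU gx hgx gy hgy hxy using hno
    set a : ℝ → X := fun m => if dist (gx m) x₀ ≤ dist (gy m) x₀ then gx m else gy m with ha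
    set b : ℝ → X := fun m => if dist (gx m) x₀ ≤ dist (gy m) x₀ then gy m else gx m with hb
    have haU : ∀ m, a m ∈ gU m := by
      intro m; rw [ha]; dsimp only; split_ifs; exacts [hgx m, hgy m]
    have hbU : ∀ m, b m ∈ gU m := by
      intro m; rw [hb]; dsimp only; split_ifs; exacts [hgy m, hgx m]
    have hdab : ∀ m, m < dist (a m) (b m) := by
      intro m; rw [ha, hb]; dsimp only; split_ifs
      · exact hxy m
      · rw [dist_comm]; exact hxy m
    have haleb : ∀ m, dist (a m) x₀ ≤ dist (b m) x₀ := by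
      intro m; rw [ha, hb]; dsimp only; split_ifs with h'
      · exact h'
      · exact le_of_not_ge h'
    by_cases hcase : ∃ R : ℝ, ∀ m : ℝ, ∃ m', m ≤ m' ∧ dist (a m') x₀ ≤ R
    · obtain ⟨R, hR⟩ := hcase
      have hBB := h.1 (Metric.closedBall x₀ R) Metric.isBounded_closedBall
      obtain ⟨ρ, hρ⟩ := hBB.subset_closedBall x₀
      obtain ⟨m', hm1, hm2⟩ := hR (R + ρ + 1)
      have hsub : b m' ∈ st (Metric.closedBall x₀ R) 𝒰 := by
        refine Set.mem_union_right _ ?_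
        simp only [Set.mem_iUnion]
        exact ⟨gU m', ⟨hgU m', a m', haU m', Metric.mem_closedBall.2 hm2⟩, hbU m'⟩
      have hbρ : dist (b m') x₀ ≤ ρ := Metric.mem_closedBall.1 (hρ hsub)
      have htri : dist (a m') (b m') ≤ dist (a m') x₀ + dist (b m') x₀ :=
        dist_triangle_right _ _ _
      have := hdab m'
      linarith
    · push_neg at hcase
      have P : ∀ T : ℝ, ∃ U, U ∈ 𝒰 ∧ ∃ p, ∃ q, p ∈ U ∧ q ∈ U ∧ T ≤ dist p q ∧ T ≤ dist p x₀ ∧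
          dist p x₀ ≤ dist q x₀ := by
        intro Tv
        obtain ⟨m, hm⟩ := hcase Tv
        have h1 := hm (max m Tv) (le_max_left _ _)
        refine ⟨gU (max m Tv), hgU _, a (max m Tv), b (max m Tv), haU _, hbU _,
          le_trans (le_max_right m Tv) (hdab _).le, h1.le, haleb _⟩
      obtain ⟨f, hfc, hfb, hfso, hfsep⟩ := exists_so x₀ 𝒰 P
      set F : X → ℂ := fun x => (f x : ℂ) with hF
      have hdF : ∀ x y, dist (F x) (F y) = |f x - f y| := by
        intro x y
        rw [hF]
        dsimp only
        rw [Complex.isometry_ofReal.dist_eq, Real.dist_eq]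
      have hF𝒞 : F ∈ {f : X → ℂ | Continuous f ∧ (∃ M : ℝ, ∀ x, ‖f x‖ ≤ M) ∧
          ∀ r : ℝ, 0 < r → ∀ ε : ℝ, 0 < ε → ∃ B : Set X, Bornology.IsBounded B ∧
            ∀ x y : X, dist x y ≤ r → x ∉ B → y ∉ B → dist (f x) (f y) ≤ ε} := by
        refine ⟨Complex.continuous_ofReal.comp hfc, ⟨1, fun x => ?_⟩, ?_⟩
        · rw [hF]; dsimp only
          rw [Complex.norm_real]
          exact hfb x
        · intro r hr ε hε
          obtain ⟨B, hB, hBspec⟩ := hfso r hr ε hε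
          refine ⟨B, hB, fun x y hxy hx hy => ?_⟩
          rw [hdF]
          exact hBspec x y hxy hx hy
      obtain ⟨B', hB', hBsub, hspec⟩ := h.2 ∅ Bornology.isBounded_empty F hF𝒞 (1/2) (by norm_num)
      obtain ⟨ρ, hρ⟩ := hB'.subset_closedBall x₀
      obtain ⟨U, hU, p, hp, q, hq, hpρ, hqρ, hfp, hfq⟩ := hfsep ρ
      have hpB : p ∉ B' := fun hmem => absurd (Metric.mem_closedBall.1 (hρ hmem)) (not_le.2 hpρ)
      have hqB : q ∉ B' := fun hmem => absurd (Metric.mem_closedBall.1 (hρ hmem)) (not_le.2 hqρ)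
      have := hspec U hU p ⟨hp, hpB⟩ q ⟨hq, hqB⟩
      rw [hdF, hfp, hfq] at this
      norm_num at this
  · rintro ⟨M, hM⟩
    constructor
    · intro B hB
      rw [Metric.isBounded_iff] at hB ⊢
      obtain ⟨C, hC⟩ := hB
      have key : ∀ z ∈ st B 𝒰, ∃ w ∈ B, dist z w ≤ max M 0 := by
        intro z hz
        rcases hz with hz | hz
        · exact ⟨z, hz, by simpa using le_max_right M 0⟩
        · simp only [Set.mem_iUnion] at hz
          obtain ⟨U, ⟨hU𝒰, w, hwU, hwB⟩, hzU⟩ := hz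
          exact ⟨w, hwB, le_trans (hM U hU𝒰 z hzU w hwU) (le_max_left M 0)⟩
      refine ⟨max M 0 + C + max M 0, ?_⟩
      intro x hx y hy
      obtain ⟨wx, hwxB, hwx⟩ := key x hx
      obtain ⟨wy, hwyB, hwy⟩ := key y hy
      calc dist x y ≤ dist x wx + dist wx wy + dist wy y := dist_triangle4 x wx wy y
      _ ≤ max M 0 + C + max M 0 := by
          have h1 := hC hwxB hwyB
          have h2 : dist wy y = dist y wy := dist_comm wy y
          linarith
    · intro B hB f hf ε hε
      obtain ⟨hfc, hfbd, hso⟩ := hf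
      obtain ⟨B₀, hB₀, hB₀spec⟩ := hso (max M 1) (lt_of_lt_of_le one_pos (le_max_right M 1)) ε hε
      refine ⟨B ∪ B₀, hB.union hB₀, Set.subset_union_left, ?_⟩
      rintro U hU x ⟨hxU, hxB⟩ y ⟨hyU, hyB⟩
      refine hB₀spec x y (le_trans (hM U hU x hxU y hyU) (le_max_left M 1)) ?_ ?_
      · exact fun hmem => hxB (Set.mem_union_right _ hmem)
      · exact fun hmem => hyB (Set.mem_union_right _ hmem)
end

section
/- Let X and Y be sets with large scale structures (with their induced bounded structures). Suppose f : X → Y maps every uniformly bounded family of X to a uniformly bounded family of Y, maps bounded sets to bounded sets, and is proper (preimages of bounded sets are bounded). If g : Y → ℂ is slowly oscillating, then g ∘ f : X → ℂ is slowly oscillating. -/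
/-- Bounded sets are closed under subsets. -/
lemma LSBounded.mono {X : Type*} {ℒ : LargeScaleStructure X} {A B : Set X}
    (hB : LSBounded ℒ B) (hAB : A ⊆ B) : LSBounded ℒ A := by
  rcases hB with ⟨x, rfl⟩ | ⟨𝒰, h𝒰, U, hU, hBU⟩
  · exact Or.inr ⟨_, ℒ.singletons_mem, {x}, ⟨x, rfl⟩, hAB⟩
  · exact Or.inr ⟨𝒰, h𝒰, U, hU, hAB.trans hBU⟩

/-- if `f : X → Y` is large scale continuous, maps bounded sets
to bounded sets and is proper, then `g ∘ f` is slowly oscillating whenever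
`g : Y → ℂ` is slowly oscillating. -/
theorem stmt_12 {X Y : Type*} (ℒX : LargeScaleStructure X)
    (ℒY : LargeScaleStructure Y) (f : X → Y)
    (hub : ∀ 𝒰 ∈ ℒX.fams, (Set.image f) '' 𝒰 ∈ ℒY.fams)
    (hbdd : ∀ B : Set X, LSBounded ℒX B → LSBounded ℒY (f '' B))
    (hproper : ∀ B : Set Y, LSBounded ℒY B → LSBounded ℒX (f ⁻¹' B))
    (g : Y → ℂ) (hg : SlowlyOscillating ℒY g) :
    SlowlyOscillating ℒX (g ∘ f) := by
  intro 𝒰 h𝒰 ε hε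
  obtain ⟨B, hBwb, hB⟩ := hg _ (hub 𝒰 h𝒰) ε hε
  refine ⟨f ⁻¹' B, ?_, ?_⟩
  · intro x
    refine LSBounded.mono (hproper _ (hBwb (f x))) ?_
    rintro y ⟨hyB, hy⟩
    refine ⟨hyB, ?_⟩
    have := hbdd _ hy
    rwa [Set.image_pair] at this
  · intro U hU ⟨u, huU, huB⟩ x hx y hy
    exact hB (f '' U) ⟨U, hU, rfl⟩ ⟨f u, ⟨u, huU, rfl⟩, huB⟩ _ ⟨x, hx, rfl⟩ _ ⟨y, hy, rfl⟩
end

section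
/- Let (X,d) be a proper metric space, let ℬ be the collection of precompact subsets of X, and let 𝒞 be the collection of bounded uniformly continuous functions X → ℂ. For a bounded continuous function f : X → ℂ the following are equivalent: (a) f is uniformly continuous; (b) for every uniformly (𝒞,ℬ)-bounded family 𝒰 of subsets of X and every ε > 0 there is a precompact set B ⊆ X such that diam f(U ∖ B) ≤ ε for all U ∈ 𝒰. (That is, for a proper metric space X one has S₀(L₀(X)) = X, equivalently C(X, LS(𝒞,ℬ)) = 𝒞.) -/
/-- for a proper metric space `X`, with `ℬ` the precompact
subsets (= weakly bounded sets) and `𝒞` the bounded uniformly continuous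
functions, a bounded continuous `f : X → ℂ` is uniformly continuous iff it is
slowly oscillating with respect to `LS(𝒞,ℬ)`; i.e. `S₀(L₀(X)) = X`,
equivalently `C(X, LS(𝒞,ℬ)) = 𝒞`. -/
theorem stmt_13 {X : Type*} [MetricSpace X] [ProperSpace X] (f : X → ℂ)
    (hfc : Continuous f) (hfb : ∃ M : ℝ, ∀ x, ‖f x‖ ≤ M) :
    UniformContinuous f ↔
      ∀ 𝒰 : Set (Set X),
        UnifCB (fun B : Set X => IsCompact (closure B))
          {g : X → ℂ | UniformContinuous g ∧ ∃ M : ℝ, ∀ x, ‖g x‖ ≤ M} 𝒰 →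
        ∀ ε : ℝ, 0 < ε → ∃ B : Set X, IsCompact (closure B) ∧
          ∀ U ∈ 𝒰, ∀ x ∈ U \ B, ∀ y ∈ U \ B, dist (f x) (f y) ≤ ε := by
  constructor
  · intro huc 𝒰 h𝒰 ε hε
    obtain ⟨-, h2⟩ := h𝒰
    obtain ⟨B', hB', -, hprop⟩ :=
      h2 ∅ (by simp) f ⟨huc, hfb⟩ ε hε
    exact ⟨B', hB', hprop⟩
  · intro h
    by_contra huc
    rw [Metric.uniformContinuous_iff] at huc
    push_neg at huc
    obtain ⟨ε₀, hε₀, hbad⟩ := huc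
    obtain ⟨x₀, y₀, -, -⟩ := hbad 1 one_pos
    by_cases hbd : ∃ δ > (0:ℝ), ∃ R : ℝ, ∀ a b : X,
        dist a b < δ → ε₀ ≤ dist (f a) (f b) → dist a x₀ ≤ R
    · -- bounded case: contradiction via uniform continuity on a compact set
      obtain ⟨δ, hδ, R, hR⟩ := hbd
      have hcs : IsCompact (Metric.closedBall x₀ (R + δ)) := isCompact_closedBall _ _
      have hucon := hcs.uniformContinuousOn_of_continuous hfc.continuousOn
      rw [Metric.uniformContinuousOn_iff] at hucon
      obtain ⟨δ₂, hδ₂, hu⟩ := hucon ε₀ hε₀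
      obtain ⟨a, b, hab, habf⟩ := hbad (min δ δ₂) (lt_min hδ hδ₂)
      have habδ : dist a b < δ := lt_of_lt_of_le hab (min_le_left _ _)
      have haR : dist a x₀ ≤ R := hR a b habδ habf
      have ha : a ∈ Metric.closedBall x₀ (R + δ) := by
        simp only [Metric.mem_closedBall]; linarith [hδ.le]
      have hb : b ∈ Metric.closedBall x₀ (R + δ) := by
        simp only [Metric.mem_closedBall]
        calc dist b x₀ ≤ dist b a + dist a x₀ := dist_triangle _ _ _
          _ ≤ R + δ := by rw [dist_comm b a]; linarith
      have := hu a ha b hb (lt_of_lt_of_le hab (min_le_right _ _))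
      linarith
    · -- unbounded case: build a uniformly (𝒞,ℬ)-bounded family of pairs
      push_neg at hbd
      choose x y hxy hfar hdist using fun n : ℕ =>
        hbd (1 / (n + 1)) (by positivity) n
      set 𝒰 : Set (Set X) := Set.range fun n : ℕ => ({x n, y n} : Set X) with h𝒰def
      -- distance within a pair is small
      have hsmall : ∀ n : ℕ, ∀ u ∈ ({x n, y n} : Set X), ∀ v ∈ ({x n, y n} : Set X),
          dist u v ≤ 1 / (n + 1) := by
        intro n u hu v hv
        have h1 : (0:ℝ) < 1 / (n + 1) := by positivity
        have hle : dist (x n) (y n) ≤ 1 / (n + 1) := (hxy n).le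
        rcases hu with rfl | rfl <;> rcases hv with rfl | rfl
        · rw [dist_self]; positivity
        · exact hle
        · rw [dist_comm]; exact hle
        · rw [dist_self]; positivity
      have hone : ∀ n : ℕ, (1 : ℝ) / (n + 1) ≤ 1 := by
        intro n
        rw [div_le_one (by positivity)]
        have : (0:ℝ) ≤ (n:ℝ) := n.cast_nonneg
        linarith
      have hUC : UnifCB (fun B : Set X => IsCompact (closure B))
          {g : X → ℂ | UniformContinuous g ∧ ∃ M : ℝ, ∀ x, ‖g x‖ ≤ M} 𝒰 := by
        constructor
        · -- stars of precompact sets are precompact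
          intro B hB
          obtain ⟨R, hBR⟩ := (hB.isBounded.subset subset_closure).subset_closedBall x₀
          have hsub : st B 𝒰 ⊆ Metric.closedBall x₀ (max R 0 + 1) := by
            intro z hz
            rcases hz with hz | hz
            · have hz' := hBR hz
              simp only [Metric.mem_closedBall] at hz' ⊢
              have := le_max_left R 0
              linarith
            · simp only [Set.mem_iUnion] at hz
              obtain ⟨U, ⟨hU𝒰, b, hbU, hbB⟩, hzU⟩ := hz
              obtain ⟨n, rfl⟩ := hU𝒰
              have hzb : dist z b ≤ 1 := le_trans (hsmall n z hzU b hbU) (hone n)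
              have hbx₀ : dist b x₀ ≤ R := hBR hbB
              simp only [Metric.mem_closedBall]
              calc dist z x₀ ≤ dist z b + dist b x₀ := dist_triangle _ _ _
                _ ≤ max R 0 + 1 := by
                    have := le_max_left R 0; linarith
          exact (Metric.isBounded_closedBall.subset hsub).isCompact_closure
        · -- oscillation condition for uniformly continuous bounded functions
          intro B hB g hg ε hε
          obtain ⟨hguc, -⟩ := hg
          rw [Metric.uniformContinuous_iff] at hguc
          obtain ⟨δ, hδ, hgδ⟩ := hguc ε hε
          obtain ⟨N, hN⟩ := exists_nat_gt (1 / δ)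
          set F : Set X := ⋃ n ∈ Set.Iic N, ({x n, y n} : Set X) with hF
          have hFfin : F.Finite :=
            (Set.finite_Iic N).biUnion fun n _ => Set.Finite.insert _ (Set.finite_singleton _)
          refine ⟨B ∪ F, ?_, Set.subset_union_left, ?_⟩
          · show IsCompact (closure (B ∪ F))
            rw [closure_union]
            exact hB.union (by rw [hFfin.isClosed.closure_eq]; exact hFfin.isCompact)
          · rintro U ⟨n, rfl⟩ u hu v hv
            by_cases hn : n ≤ N
            · exfalso
              apply hu.2
              refine Or.inr ?_
              exact Set.mem_biUnion hn hu.1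
            · push_neg at hn
              have hnd : (1:ℝ) / (n + 1) < δ := by
                rw [div_lt_iff₀ (by positivity)]
                have h1 : (1:ℝ) / δ < N := hN
                have h2 : (N:ℝ) < n := by exact_mod_cast hn
                have : (1:ℝ) < δ * (N + 1) := by
                  rw [div_lt_iff₀ hδ] at h1
                  nlinarith
                nlinarith
              have huv : dist u v < δ := lt_of_le_of_lt (hsmall n u hu.1 v hv.1) hnd
              exact (hgδ huv).le
      -- apply the assumption to get a contradiction
      obtain ⟨B, hB, hprop⟩ := h 𝒰 hUC (ε₀ / 2) (by linarith)
      obtain ⟨R, hBR⟩ := (hB.isBounded.subset subset_closure).subset_closedBall x₀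
      obtain ⟨n, hn⟩ := exists_nat_gt (max R 0 + 1)
      have hxn : x n ∉ B := by
        intro hmem
        have := hBR hmem
        simp only [Metric.mem_closedBall] at this
        have h1 := hdist n
        have h2 := le_max_left R 0
        linarith
      have hyn : y n ∉ B := by
        intro hmem
        have h3 := hBR hmem
        simp only [Metric.mem_closedBall] at h3
        have h1 := hdist n
        have h2 := le_max_left R 0
        have h4 : dist (x n) x₀ ≤ dist (x n) (y n) + dist (y n) x₀ := dist_triangle _ _ _
        have h5 : dist (x n) (y n) ≤ 1 := le_trans (hxy n).le (hone n)
        linarith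
      have := hprop {x n, y n} ⟨n, rfl⟩ (x n) ⟨Or.inl rfl, hxn⟩ (y n)
        ⟨Or.inr rfl, hyn⟩
      have := hfar n
      linarith
end

section
/- Let X be a set, V an index set, and φ : X → ℓ¹(V) a partition of unity: φ(x)(v) ≥ 0 for all v ∈ V and ∑_{v∈V} φ(x)(v) = 1 for each x ∈ X. Let 𝒰 be the support family of φ, consisting of the nonempty sets S_v = {x ∈ X : φ(x)(v) > 0}, v ∈ V. Then there exists a partition of unity ψ : X → ℓ¹(X) whose support family {T_z : z ∈ X, T_z ≠ ∅}, where T_z = {x ∈ X : ψ(x)(z) > 0}, coarsens 𝒰 (every nonempty S_v is contained in some nonempty T_z) and refines st(𝒰,𝒰) (every nonempty T_z is contained in st(S_v,𝒰) for some v). Moreover, if X carries a uniform structure and φ is uniformly continuous with respect to the ℓ¹-norm, then ψ can be chosen uniformly continuous. -/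
set_option maxHeartbeats 1000000 in
/-- given a partition of unity `φ : X → ℓ¹(V)` with support
family `𝒰 = {S_v ≠ ∅}`, there is a partition of unity `ψ : X → ℓ¹(X)` whose
support family coarsens `𝒰` and refines `st(𝒰,𝒰)`; moreover if `φ` is
uniformly continuous then `ψ` can be chosen uniformly continuous. -/
theorem stmt_14 {X V : Type*} [UniformSpace X]
    (φ : X → lp (fun _ : V => ℝ) 1)
    (hpos : ∀ (x : X) (v : V), 0 ≤ φ x v)
    (hsum : ∀ x : X, HasSum (fun v : V => φ x v) 1) :
    ∃ ψ : X → lp (fun _ : X => ℝ) 1,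
      (∀ (x z : X), 0 ≤ ψ x z) ∧
      (∀ x : X, HasSum (fun z : X => ψ x z) 1) ∧
      -- the support family of ψ coarsens the support family 𝒰 of φ:
      (∀ v : V, ({x : X | 0 < φ x v} : Set X).Nonempty →
        ∃ z : X, ({x : X | 0 < ψ x z} : Set X).Nonempty ∧
          {x : X | 0 < φ x v} ⊆ {x : X | 0 < ψ x z}) ∧
      -- the support family of ψ refines st(𝒰,𝒰):
      (∀ z : X, ({x : X | 0 < ψ x z} : Set X).Nonempty →
        ∃ v : V, {x : X | 0 < ψ x z} ⊆
          st {x : X | 0 < φ x v}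
            {S : Set X | ∃ w : V, S = {x : X | 0 < φ x w} ∧ S.Nonempty}) ∧
      -- uniform continuity can be preserved:
      (UniformContinuous φ → UniformContinuous ψ) := by
  classical
  by_cases hX : Nonempty X
  swap
  · haveI : IsEmpty X := not_nonempty_iff.mp hX
    exact ⟨fun _ => 0, fun x => isEmptyElim x, fun x => isEmptyElim x,
      fun v ⟨x, _⟩ => isEmptyElim x, fun z => isEmptyElim z,
      fun _ => uniformContinuous_const⟩
  obtain ⟨x₀⟩ := hX
  set p : V → X := fun v => if h : ∃ x, 0 < φ x v then h.choose else x₀ with hp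
  have hpmem : ∀ v, (∃ x, 0 < φ x v) → 0 < φ (p v) v := by
    intro v h
    simp only [hp, dif_pos h]
    exact h.choose_spec
  have hsum' : ∀ x, HasSum (fun z : X => ∑' v : p ⁻¹' {z}, φ x v) 1 :=
    fun x => (hsum x).tsum_fiberwise p
  have hnn : ∀ x z, 0 ≤ ∑' v : p ⁻¹' {z}, φ x v :=
    fun x z => tsum_nonneg (fun v => hpos x _)
  have hmem : ∀ x, Memℓp (fun z : X => ∑' v : p ⁻¹' {z}, φ x v) 1 := by
    intro x
    apply memℓp_gen
    have : (fun z : X => ‖(∑' v : p ⁻¹' {z}, φ x v)‖ ^ ((1 : ENNReal).toReal))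
        = fun z : X => ∑' v : p ⁻¹' {z}, φ x v := by
      funext z
      rw [ENNReal.toReal_one, Real.rpow_one, Real.norm_of_nonneg (hnn x z)]
    rw [this]
    exact (hsum' x).summable
  set ψ : X → lp (fun _ : X => ℝ) 1 := fun x => ⟨fun z => ∑' v : p ⁻¹' {z}, φ x v, hmem x⟩
    with hψ
  have hψapp : ∀ x z, ψ x z = ∑' v : p ⁻¹' {z}, φ x v := fun x z => rfl
  have key : ∀ x z, 0 < ψ x z ↔ ∃ v, p v = z ∧ 0 < φ x v := by
    intro x z
    rw [hψapp]
    constructor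
    · intro h
      by_contra hc
      push_neg at hc
      have hz : ∀ v : p ⁻¹' {z}, φ x v = (0 : ℝ) := by
        rintro ⟨v, hv⟩
        exact le_antisymm (hc v hv) (hpos x v)
      have h0 : (∑' v : p ⁻¹' {z}, φ x v) = 0 := by
        rw [tsum_congr hz]
        exact tsum_zero
      rw [h0] at h
      exact lt_irrefl 0 h
    · rintro ⟨v, hv, hpv⟩
      exact Summable.tsum_pos ((hsum x).summable.subtype _) (fun w => hpos x _) ⟨v, hv⟩ hpv
  refine ⟨ψ, fun x z => hnn x z, fun x => hsum' x, ?_, ?_, ?_⟩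
  · rintro v ⟨x, hx⟩
    refine ⟨p v, ⟨x, ?_⟩, fun y hy => ?_⟩
    · exact (key x (p v)).mpr ⟨v, rfl, hx⟩
    · exact (key y (p v)).mpr ⟨v, rfl, hy⟩
  · rintro z ⟨x₁, hx₁⟩
    obtain ⟨w, hw, hw1⟩ := (key x₁ z).mp hx₁
    refine ⟨w, fun x hx => ?_⟩
    obtain ⟨u, hu, hu1⟩ := (key x z).mp hx
    have hzu : 0 < φ z u := by rw [← hu]; exact hpmem u ⟨x, hu1⟩
    have hzw : 0 < φ z w := by rw [← hw]; exact hpmem w ⟨x₁, hw1⟩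
    rw [st, Set.mem_union]
    right
    rw [Set.mem_iUnion₂]
    exact ⟨{x : X | 0 < φ x u}, ⟨⟨u, rfl, ⟨z, hzu⟩⟩, ⟨z, hzu, hzw⟩⟩, hu1⟩
  · intro hφ
    have hbound : ∀ x y : X, dist (ψ x) (ψ y) ≤ dist (φ x) (φ y) := by
      intro x y
      rw [dist_eq_norm, dist_eq_norm]
      set d : lp (fun _ : V => ℝ) 1 := φ x - φ y with hd
      set e : lp (fun _ : X => ℝ) 1 := ψ x - ψ y with he
      have hdn : HasSum (fun v => ‖d v‖) ‖d‖ := by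
        have := lp.hasSum_norm (p := 1) (by norm_num) d
        simpa using this
      have hen : HasSum (fun z => ‖e z‖) ‖e‖ := by
        have := lp.hasSum_norm (p := 1) (by norm_num) e
        simpa using this
      have hfib : HasSum (fun z : X => ∑' v : p ⁻¹' {z}, ‖d v‖) ‖d‖ :=
        hdn.tsum_fiberwise p
      refine hasSum_le (fun z => ?_) hen hfib
      have hsx : Summable fun v : p ⁻¹' {z} => φ x ↑v := (hsum x).summable.subtype _
      have hsy : Summable fun v : p ⁻¹' {z} => φ y ↑v := (hsum y).summable.subtype _
      have hez : e z = ∑' v : p ⁻¹' {z}, (d : ∀ v, ℝ) v := by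
        rw [he, lp.coeFn_sub, Pi.sub_apply, hψapp, hψapp, ← Summable.tsum_sub hsx hsy]
        refine tsum_congr fun v => ?_
        rw [hd, lp.coeFn_sub, Pi.sub_apply]
      rw [hez]
      exact norm_tsum_le_tsum_norm (hdn.summable.subtype _)
    rw [UniformContinuous, Metric.uniformity_basis_dist.tendsto_right_iff] at hφ ⊢
    intro ε hε
    filter_upwards [hφ ε hε] with q hq
    exact lt_of_le_of_lt (hbound q.1 q.2) hq
end

section
/- Let X be a set and let A be a unital *-subalgebra of B(ℓ²(X)). If a family 𝒰 of subsets of X is 𝓕-bounded for some finite *-symmetric subset 𝓕 of the norm closure of A, then 𝒰 is 𝓖-bounded for some finite *-symmetric subset 𝓖 of A. Consequently, A and its norm closure induce the same large scale structure on X. -/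
noncomputable abbrev l2 (X : Type*) : Type _ := lp (fun _ : X => ℂ) 2

/-- The standard basis vector `δ_x` of `ℓ²(X)`. -/
noncomputable def delta {X : Type*} (x : X) : l2 X :=
  haveI := Classical.decEq X
  lp.single 2 x (1 : ℂ)

/-- The matrix coefficient `⟨a δ_x, δ_y⟩`. -/
noncomputable def entry {X : Type*} (a : l2 X →L[ℂ] l2 X) (x y : X) : ℂ :=
  inner ℂ (a (delta x)) (delta y)

/-- A family of operators is `*`-symmetric if it is closed under adjoints. -/
def StarSymmetric {X : Type*} (𝓕 : Set (l2 X →L[ℂ] l2 X)) : Prop :=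
  ∀ a ∈ 𝓕, star a ∈ 𝓕

/-- A family `𝒰` of subsets of `X` is `𝓕`-bounded. -/
def FBounded {X : Type*} (𝓕 : Set (l2 X →L[ℂ] l2 X)) (𝒰 : Set (Set X)) : Prop :=
  ∃ n : ℕ, 1 ≤ n ∧ ∀ U ∈ 𝒰, ∀ x ∈ U, ∀ y ∈ U, x ≠ y →
    ∃ c : ℕ → X, c 1 = x ∧ c n = y ∧ (∀ i : ℕ, 1 ≤ i → i ≤ n → c i ∈ U) ∧
      ∀ i : ℕ, 1 ≤ i → i < n →
        c i = c (i + 1) ∨ ∃ a ∈ 𝓕, 1 ≤ ‖entry a (c i) (c (i + 1))‖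

/-!
Matrix coefficients `⟨a δ_x, δ_y⟩` are bounded by `‖a‖`. Hence if `b ∈ A` satisfies
`‖a - b‖ < 1/2`, every coefficient of `a` of modulus at least `1` is matched by a
coefficient of `2 • b` of modulus at least `1`, so the same chains witness boundedness for
`{2 • b}`; adding the adjoints makes this finite family `*`-symmetric without losing any chain.
-/

section Entry

variable {X : Type*}

lemma norm_delta (x : X) : ‖delta x‖ = 1 := by
  simp [delta]

lemma entry_sub (a b : l2 X →L[ℂ] l2 X) (x y : X) :
    entry (a - b) x y = entry a x y - entry b x y := by
  simp [entry]

lemma norm_entry_smul (c : ℂ) (a : l2 X →L[ℂ] l2 X) (x y : X) :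
    ‖entry (c • a) x y‖ = ‖c‖ * ‖entry a x y‖ := by
  simp [entry, mul_comm]

lemma norm_entry_le_opNorm (a : l2 X →L[ℂ] l2 X) (x y : X) : ‖entry a x y‖ ≤ ‖a‖ :=
  calc ‖entry a x y‖ ≤ ‖a (delta x)‖ * ‖delta y‖ := norm_inner_le_norm _ _
    _ ≤ ‖a‖ * ‖delta x‖ * ‖delta y‖ := by gcongr; exact a.le_opNorm _
    _ = ‖a‖ := by rw [norm_delta, norm_delta, mul_one, mul_one]

lemma one_le_norm_entry_two_smul_of_norm_sub_lt {a b : l2 X →L[ℂ] l2 X} (hab : ‖a - b‖ < 1 / 2)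
    {x y : X} (h : 1 ≤ ‖entry a x y‖) : 1 ≤ ‖entry ((2 : ℂ) • b) x y‖ := by
  have hclose : ‖entry a x y - entry b x y‖ < 1 / 2 :=
    (entry_sub a b x y ▸ norm_entry_le_opNorm (a - b) x y).trans_lt hab
  have := norm_sub_norm_le (entry a x y) (entry b x y)
  rw [norm_entry_smul, Complex.norm_two]
  linarith

end Entry

section Bounded

variable {X : Type*} {𝓕 𝓖 : Set (l2 X →L[ℂ] l2 X)} {𝒰 : Set (Set X)}

lemma FBounded.of_forall_exists_entry
    (h : ∀ a ∈ 𝓕, ∃ b ∈ 𝓖, ∀ x y, 1 ≤ ‖entry a x y‖ → 1 ≤ ‖entry b x y‖)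
    (hb : FBounded 𝓕 𝒰) : FBounded 𝓖 𝒰 := by
  obtain ⟨n, hn, H⟩ := hb
  refine ⟨n, hn, fun U hU x hx y hy hxy => ?_⟩
  obtain ⟨c, hc1, hcn, hcU, hstep⟩ := H U hU x hx y hy hxy
  refine ⟨c, hc1, hcn, hcU, fun i hi hin => ?_⟩
  rcases hstep i hi hin with heq | ⟨a, ha, hge⟩
  · exact Or.inl heq
  · obtain ⟨b, hb, hab⟩ := h a ha
    exact Or.inr ⟨b, hb, hab _ _ hge⟩

lemma starSymmetric_union_star_image (𝓖 : Set (l2 X →L[ℂ] l2 X)) :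
    StarSymmetric (𝓖 ∪ star '' 𝓖) := by
  rintro g (hg | ⟨h, hh, rfl⟩)
  · exact Or.inr ⟨g, hg, rfl⟩
  · exact Or.inl (by rwa [star_star])

lemma FBounded.exists_finite_starSymmetric_subset_of_subset_closure
    (A : StarSubalgebra ℂ (l2 X →L[ℂ] l2 X)) (hfin : 𝓕.Finite)
    (hsub : 𝓕 ⊆ closure (A : Set (l2 X →L[ℂ] l2 X))) (hb : FBounded 𝓕 𝒰) :
    ∃ 𝓖 : Set (l2 X →L[ℂ] l2 X), 𝓖.Finite ∧
      𝓖 ⊆ (A : Set (l2 X →L[ℂ] l2 X)) ∧ StarSymmetric 𝓖 ∧ FBounded 𝓖 𝒰 := by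
  have happrox : ∀ a ∈ 𝓕, ∃ b ∈ (A : Set (l2 X →L[ℂ] l2 X)), ‖a - b‖ < 1 / 2 := by
    intro a ha
    obtain ⟨b, hbA, hab⟩ := Metric.mem_closure_iff.mp (hsub ha) (1 / 2) (by norm_num)
    exact ⟨b, hbA, by rwa [dist_eq_norm] at hab⟩
  choose! f hfA hf using happrox
  set 𝓖 := (fun a => (2 : ℂ) • f a) '' 𝓕
  refine ⟨𝓖 ∪ star '' 𝓖, (hfin.image _).union ((hfin.image _).image _), ?_,
    starSymmetric_union_star_image 𝓖, ?_⟩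
  · rintro g (⟨a, ha, rfl⟩ | ⟨g, ⟨a, ha, rfl⟩, rfl⟩)
    · exact A.smul_mem (hfA a ha) _
    · exact star_mem (A.smul_mem (hfA a ha) _)
  · exact hb.of_forall_exists_entry fun a ha => ⟨(2 : ℂ) • f a, Or.inl ⟨a, ha, rfl⟩,
      fun x y => one_le_norm_entry_two_smul_of_norm_sub_lt (hf a ha)⟩

end Bounded

/-- if a family of subsets of `X` is `𝓕`-bounded for a finite
`*`-symmetric subset `𝓕` of the norm closure of a unital `*`-subalgebra
`A ⊆ B(ℓ²(X))`, then it is `𝓖`-bounded for some finite `*`-symmetric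
`𝓖 ⊆ A`; consequently `A` and its closure induce the same large scale
structure on `X`. -/
theorem stmt_15 {X : Type*} (A : StarSubalgebra ℂ (l2 X →L[ℂ] l2 X))
    (𝒰 : Set (Set X)) :
    ((∃ 𝓕 : Set (l2 X →L[ℂ] l2 X), 𝓕.Finite ∧
        𝓕 ⊆ closure (A : Set (l2 X →L[ℂ] l2 X)) ∧ StarSymmetric 𝓕 ∧
        FBounded 𝓕 𝒰) →
      ∃ 𝓖 : Set (l2 X →L[ℂ] l2 X), 𝓖.Finite ∧
        𝓖 ⊆ (A : Set (l2 X →L[ℂ] l2 X)) ∧ StarSymmetric 𝓖 ∧ FBounded 𝓖 𝒰) ∧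
    {𝒱 : Set (Set X) | ∃ 𝓕 : Set (l2 X →L[ℂ] l2 X), 𝓕.Finite ∧
        𝓕 ⊆ (A : Set (l2 X →L[ℂ] l2 X)) ∧ StarSymmetric 𝓕 ∧ FBounded 𝓕 𝒱} =
    {𝒱 : Set (Set X) | ∃ 𝓕 : Set (l2 X →L[ℂ] l2 X), 𝓕.Finite ∧
        𝓕 ⊆ closure (A : Set (l2 X →L[ℂ] l2 X)) ∧ StarSymmetric 𝓕 ∧
        FBounded 𝓕 𝒱} := by
  refine ⟨fun ⟨𝓕, hfin, hsub, _, hb⟩ =>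
    hb.exists_finite_starSymmetric_subset_of_subset_closure A hfin hsub, ?_⟩
  refine Set.Subset.antisymm ?_ ?_
  · rintro 𝒱 ⟨𝓕, hfin, hsub, hsym, hb⟩
    exact ⟨𝓕, hfin, hsub.trans subset_closure, hsym, hb⟩
  · rintro 𝒱 ⟨𝓕, hfin, hsub, _, hb⟩
    exact hb.exists_finite_starSymmetric_subset_of_subset_closure A hfin hsub
end
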